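/- arXiv:1507.00648 — 7 statements merged into one kernel-verified Lean document; each statement's English description precedes it below -/
import Mathlib

section
/- Let G = (V,E) be a finite simple undirected graph with edge weights w : E → {0,1}, let η be the total number of 1-edges of G, and let α > 0. Suppose T is a subtree of G (a connected acyclic subgraph of G) on at least two vertices whose set L of leaves (vertices of degree 1 in T) satisfies Σ_{v ∈ L} W_G(v) ≥ α·η. Then there exists a nonempty set S ⊆ V such that G[S] is connected and w(δ(S)) ≥ α·η/4. -/
namespace CMCPaper

variable {V : Type*}

/-- Set of edges of `G` with exactly one endpoint in `S`. -/
def cutSet (G : SimpleGraph V) (S : Set V) : Set (Sym2 V) :=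
  {e | e ∈ G.edgeSet ∧ ∃ u v, e = s(u, v) ∧ u ∈ S ∧ v ∉ S}

/-- Weight of the cut `δ(S)`. -/
noncomputable def cutWeight (G : SimpleGraph V) (w : Sym2 V → ℕ) (S : Set V) : ℕ :=
  ∑ᶠ e ∈ cutSet G S, w e

/-- Total weight of all edges of `G` (the number of 1-edges, for 0/1 weights). -/
noncomputable def totalWeight (G : SimpleGraph V) (w : Sym2 V → ℕ) : ℕ :=
  ∑ᶠ e ∈ G.edgeSet, w e

/-- `W_G(v)`: total weight of edges of `G` incident to `v`. -/
noncomputable def vertexWeight (G : SimpleGraph V) (w : Sym2 V → ℕ) (v : V) : ℕ :=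
  ∑ᶠ e ∈ {e ∈ G.edgeSet | v ∈ e}, w e

/-- `G` contains no path on three (distinct) vertices all of degree 2. -/
def NoDeg2Path3 (G : SimpleGraph V) : Prop :=
  ¬ ∃ u v w : V, u ≠ w ∧ G.Adj u v ∧ G.Adj v w ∧
      (G.neighborSet u).ncard = 2 ∧ (G.neighborSet v).ncard = 2 ∧
      (G.neighborSet w).ncard = 2

/-!
Let `L` be the set of leaves of `T` and `I = V(T) \ L`. A path of `T` between two vertices
of `I ∪ L₁` never passes through a leaf, so `G[I ∪ L₁]` is connected for every `L₁ ⊆ L`.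
For a uniformly random `L₁ ⊆ L`, an edge with an endpoint `u ∈ L` is cut by `I ∪ L₁` with
probability exactly `1/2` (adding or removing `u` flips it), while `Σ_{v ∈ L} W_G(v)` counts
every such edge at most twice. Hence some `L₁` has `w(δ(I ∪ L₁)) ≥ Σ_{v ∈ L} W_G(v) / 4`,
which is at least `α·η/4`; if that `I ∪ L₁` is empty, then `α·η ≤ 0` and `V(T)` will do.
-/

end CMCPaper

open SimpleGraph Finset

theorem Finset.two_mul_card_filter_powerset_of_insert_iff_not {α : Type*} [DecidableEq α]
    {s : Finset α} {a : α} (ha : a ∈ s) (p : Finset α → Prop) [DecidablePred p]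
    (hp : ∀ t ⊆ s.erase a, p (insert a t) ↔ ¬ p t) :
    2 * #{t ∈ s.powerset | p t} = 2 ^ #s := by
  have hpair : ∀ t ∈ (s.erase a).powerset,
      ((if p t then 1 else 0) + if p (insert a t) then 1 else 0) = 1 := by
    intro t ht
    have := hp t (mem_powerset.1 ht)
    by_cases h : p t <;> simp [h, this]
  rw [← insert_erase ha, card_filter, sum_powerset_insert (notMem_erase a s),
    ← sum_add_distrib, sum_congr rfl hpair, sum_const, card_powerset,
    card_insert_of_notMem (notMem_erase a s), smul_eq_mul, mul_one, pow_succ, mul_comm]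

namespace SimpleGraph.Subgraph

theorem induce_connected_of_subsingleton_neighborSet {V : Type*} {G : SimpleGraph V}
    {T : G.Subgraph} (hT : T.coe.Preconnected) {S : Set V} (hS : S.Nonempty) (hST : S ⊆ T.verts)
    (hleaf : ∀ v ∈ T.verts, v ∉ S → (T.neighborSet v).Subsingleton) :
    (G.induce S).Connected := by
  have hpre : (T.coe.induce {x | ↑x ∈ S}).Preconnected :=
    hT.induce_of_degree_eq_one fun v hv _ ha _ hb => Subtype.ext (hleaf v v.2 hv ha hb)
  have hsurj : Function.Surjective
      (induceHom T.hom (fun _ hx => hx : Set.MapsTo T.hom {x | ↑x ∈ S} S)) := by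
    rintro ⟨v, hv⟩
    exact ⟨⟨⟨v, hST hv⟩, hv⟩, rfl⟩
  exact (connected_iff _).2 ⟨hpre.map _ hsurj, hS.to_subtype⟩

end SimpleGraph.Subgraph

namespace CMCPaper

variable {V : Type*}

theorem mk_mem_cutSet_iff {G : SimpleGraph V} {S : Set V} {u v : V} :
    s(u, v) ∈ cutSet G S ↔ G.Adj u v ∧ ¬(u ∈ S ↔ v ∈ S) := by
  simp only [cutSet, Set.mem_ofPred_eq, mem_edgeSet, Sym2.eq_iff]
  grind

theorem mk_mem_cutSet_union_insert_iff [DecidableEq V] {G : SimpleGraph V} {I : Set V}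
    {t : Finset V} {u b : V} (hub : G.Adj u b) (huI : u ∉ I) (hut : u ∉ t) :
    s(u, b) ∈ cutSet G (I ∪ ↑(insert u t)) ↔ s(u, b) ∉ cutSet G (I ∪ ↑t) := by
  simp only [mk_mem_cutSet_iff, Set.mem_union, coe_insert, Set.mem_insert_iff, mem_coe, hub,
    hub.ne', true_and, false_or, true_or]
  tauto

theorem cutWeight_empty (G : SimpleGraph V) (w : Sym2 V → ℕ) : cutWeight G w ∅ = 0 := by
  simp [cutWeight, cutSet]

open Classical in
theorem two_mul_card_filter_mem_cutSet_union_eq [DecidableEq V] {G : SimpleGraph V} {I : Set V}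
    {L : Finset V} {u b : V} (hub : G.Adj u b) (huI : u ∉ I) (huL : u ∈ L) :
    2 * #(L.powerset.filter fun L₁ : Finset V => s(u, b) ∈ cutSet G (I ∪ ↑L₁)) = 2 ^ #L :=
  two_mul_card_filter_powerset_of_insert_iff_not huL _ fun _ ht =>
    mk_mem_cutSet_union_insert_iff hub huI fun hut => notMem_erase u L (ht hut)

theorem card_filter_mem_mul_le_sum_indicator_cutSet [DecidableEq V] {G : SimpleGraph V}
    (w : Sym2 V → ℕ) {e : Sym2 V} (he : e ∈ G.edgeSet) {I : Set V} {L : Finset V}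
    (hIL : Disjoint I ↑L) :
    #{v ∈ L | v ∈ e} * 2 ^ #L * w e ≤
      4 * ∑ L₁ ∈ L.powerset, (cutSet G (I ∪ ↑L₁)).indicator w e := by
  classical
  obtain h | ⟨u, hu⟩ := (L.filter (· ∈ e)).eq_empty_or_nonempty
  · simp [h]
  rw [mem_filter] at hu
  obtain ⟨b, rfl⟩ := Sym2.mem_iff_exists.mp hu.2
  have hends : #{v ∈ L | v ∈ s(u, b)} ≤ 2 :=
    (card_le_card (t := {u, b}) fun v hv => by
      rw [mem_filter, Sym2.mem_iff] at hv; simpa using hv.2).trans card_le_two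
  have huI : u ∉ I := hIL.notMem_of_mem_right (mem_coe.2 hu.1)
  calc #{v ∈ L | v ∈ s(u, b)} * 2 ^ #L * w s(u, b)
      ≤ 2 * 2 ^ #L * w s(u, b) := by gcongr
    _ = 4 * (#(L.powerset.filter fun L₁ : Finset V => s(u, b) ∈ cutSet G (I ∪ ↑L₁)) *
          w s(u, b)) := by
        rw [← two_mul_card_filter_mem_cutSet_union_eq he huI hu.1]; ring
    _ = 4 * ∑ L₁ ∈ L.powerset, (cutSet G (I ∪ ↑L₁)).indicator w s(u, b) := by
        simp_rw [Set.indicator_apply, ← sum_filter, sum_const, smul_eq_mul]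

section Finite

variable [Fintype V] (G : SimpleGraph V) [DecidableRel G.Adj] (w : Sym2 V → ℕ)

theorem cutWeight_eq_sum_indicator (S : Set V) :
    cutWeight G w S = ∑ e ∈ G.edgeFinset, (cutSet G S).indicator w e := by
  rw [cutWeight, finsum_mem_def, finsum_eq_sum_of_support_subset _ (s := G.edgeFinset)]
  rw [coe_edgeFinset]
  exact Set.support_indicator_subset.trans fun _ he => he.1

theorem sum_vertexWeight_eq_sum_card_mul [DecidableEq V] (L : Finset V) :
    ∑ v ∈ L, vertexWeight G w v = ∑ e ∈ G.edgeFinset, #{v ∈ L | v ∈ e} * w e := by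
  have h : ∀ v, vertexWeight G w v = ∑ e ∈ G.edgeFinset with v ∈ e, w e := by
    intro v
    rw [vertexWeight, finsum_mem_eq_toFinset_sum]
    congr 1
    ext e
    simp
  simp_rw [h, sum_filter, card_filter, sum_mul, ite_mul, one_mul, zero_mul]
  exact sum_comm

theorem exists_subset_sum_vertexWeight_le_four_mul_cutWeight [DecidableEq V] (I : Set V)
    (L : Finset V) (hIL : Disjoint I ↑L) :
    ∃ L₁ ⊆ L, ∑ v ∈ L, vertexWeight G w v ≤ 4 * cutWeight G w (I ∪ ↑L₁) := by
  suffices h : ∑ _L₁ ∈ L.powerset, ∑ v ∈ L, vertexWeight G w v ≤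
      ∑ L₁ ∈ L.powerset, 4 * cutWeight G w (I ∪ ↑L₁) by
    obtain ⟨L₁, hL₁, hle⟩ := exists_le_of_sum_le (powerset_nonempty L) h
    exact ⟨L₁, mem_powerset.1 hL₁, hle⟩
  calc ∑ _L₁ ∈ L.powerset, ∑ v ∈ L, vertexWeight G w v
      = ∑ e ∈ G.edgeFinset, #{v ∈ L | v ∈ e} * 2 ^ #L * w e := by
        rw [sum_const, card_powerset, smul_eq_mul, sum_vertexWeight_eq_sum_card_mul, mul_sum]
        exact sum_congr rfl fun _ _ => by ring
    _ ≤ ∑ e ∈ G.edgeFinset, 4 * ∑ L₁ ∈ L.powerset, (cutSet G (I ∪ ↑L₁)).indicator w e :=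
        sum_le_sum fun _ he => card_filter_mem_mul_le_sum_indicator_cutSet w
          (mem_edgeFinset.1 he) hIL
    _ = ∑ L₁ ∈ L.powerset, 4 * cutWeight G w (I ∪ ↑L₁) := by
        simp_rw [cutWeight_eq_sum_indicator, mul_sum]
        exact sum_comm

end Finite

theorem thick_tree_gives_cut_general {V : Type*} [Fintype V]
    (G : SimpleGraph V) (w : Sym2 V → ℕ)
    (η : ℕ)
    (α : ℝ)
    (T : G.Subgraph) (hTree : T.coe.IsTree)
    (hthick : α * η ≤
      ↑(∑ᶠ v ∈ {v : V | v ∈ T.verts ∧ (T.neighborSet v).ncard = 1}, vertexWeight G w v)) :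
    ∃ S : Set V, S.Nonempty ∧ (G.induce S).Connected ∧
      α * η / 4 ≤ (cutWeight G w S : ℝ) := by
  classical
  set L : Set V := {v | v ∈ T.verts ∧ (T.neighborSet v).ncard = 1}
  obtain ⟨L₁, hL₁L, hcut⟩ := exists_subset_sum_vertexWeight_le_four_mul_cutWeight G w
    (T.verts \ L) L.toFinset (by simpa using Set.disjoint_sdiff_left)
  set S := T.verts \ L ∪ ↑L₁
  have hαη : α * η ≤ 4 * cutWeight G w S := by
    rw [finsum_mem_eq_toFinset_sum] at hthick
    exact hthick.trans (by exact_mod_cast hcut)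
  obtain hS | hS := S.eq_empty_or_nonempty
  · refine ⟨T.verts, Set.nonempty_coe_sort.1 hTree.connected.nonempty,
      (Subgraph.connected_iff'.2 hTree.connected).induce_verts, ?_⟩
    rw [hS, cutWeight_empty] at hαη
    have := (cutWeight G w T.verts).cast_nonneg (α := ℝ)
    push_cast at hαη
    linarith
  refine ⟨S, hS, T.induce_connected_of_subsingleton_neighborSet hTree.connected.preconnected hS
    (Set.union_subset Set.sdiff_subset fun v hv => (Set.mem_toFinset.1 (hL₁L hv)).1) ?_,
    by linarith⟩
  intro v hv hvS
  have hvL : v ∈ L := by_contra fun h => hvS (Or.inl ⟨hv, h⟩)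
  obtain ⟨a, ha⟩ := Set.ncard_eq_one.1 hvL.2
  exact ha ▸ Set.subsingleton_singleton

/-- If `T` is a subtree of `G` on at least two vertices whose leaves `L`
satisfy `Σ_{v ∈ L} W_G(v) ≥ α·η` (an `α`-thick tree), then there is a nonempty `S` with
`G[S]` connected and `w(δ(S)) ≥ α·η/4`. -/
theorem thick_tree_gives_cut {V : Type*} [Fintype V]
    (G : SimpleGraph V) (w : Sym2 V → ℕ)
    (hw : ∀ e ∈ G.edgeSet, w e ≤ 1)
    (η : ℕ) (hη : η = totalWeight G w)
    (α : ℝ) (hα : 0 < α)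
    (T : G.Subgraph) (hTree : T.coe.IsTree) (hT2 : 2 ≤ T.verts.ncard)
    (hthick : α * η ≤
      ↑(∑ᶠ v ∈ {v : V | v ∈ T.verts ∧ (T.neighborSet v).ncard = 1}, vertexWeight G w v)) :
    ∃ S : Set V, S.Nonempty ∧ (G.induce S).Connected ∧
      α * η / 4 ≤ (cutWeight G w S : ℝ) :=
  thick_tree_gives_cut_general G w η α T hTree hthick

end CMCPaper
end

section
/- Let G = (V,E) be a connected finite simple undirected graph on n ≥ 2 vertices that contains no path on three vertices u–v–w with deg_G(u) = deg_G(v) = deg_G(w) = 2. Then G has a spanning tree with at least n/14 leaves. -/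
/-!
Take a spanning tree `T` of `G` with the maximum number of leaves, and write `L` for its leaves,
`K` for its vertices of degree `≠ 2`. Counting degrees in the tree gives `K + 2 ≤ 2L`, and at
most `2K - 2` vertices of degree two have a neighbour of degree `≠ 2`; call them boundary
vertices. The remaining degree-two vertices are inner.

Let `v` be inner with `G`-degree `> 2`, so there is an edge `vx` of `G` outside `T`. Exchanging
the `T`-edge from `v` towards `x` for `vx` turns that (degree-two) neighbour into a leaf, so by
maximality `x` was already a leaf; a second exchange shows that different such `v` give different
leaves `x`. An inner vertex of `G`-degree `2` has, by the hypothesis on `G`, a `T`-neighbour of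
`G`-degree `≠ 2`, and each such neighbour is charged at most twice (once if it is a boundary
vertex). Altogether `n ≤ K + 3L + 2(2K - 2) ≤ 13L - 14`.
-/

namespace SimpleGraph

variable {V : Type*} {G T : SimpleGraph V}

theorem Reachable.of_forall_adj {H : SimpleGraph V} (h : ∀ ⦃a b⦄, H.Adj a b → G.Reachable a b)
    {a b : V} (hab : H.Reachable a b) : G.Reachable a b := by
  obtain ⟨p⟩ := hab
  induction p with
  | nil => rfl
  | cons hadj _ ih => exact (h hadj).trans ih

theorem Reachable.exists_adj_reachable_deleteEdges {u x : V} (h : G.Reachable u x) (hne : u ≠ x) :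
    ∃ c, G.Adj u c ∧ (G.deleteEdges {s(u, c)}).Reachable c x := by
  obtain ⟨p, hp⟩ := h.exists_isPath
  cases p with
  | nil => exact absurd rfl hne
  | cons hadj q =>
    have hu : u ∉ q.support := ((Walk.cons_isPath_iff hadj q).1 hp).2
    exact ⟨_, hadj, ⟨q.toDeleteEdge _ fun he => hu (q.fst_mem_support_of_mem_edges he)⟩⟩

theorem not_reachable_deleteEdges_of_isAcyclic {v c : V} (hT : T.IsAcyclic) (hvc : T.Adj v c) :
    ¬(T.deleteEdges {s(v, c)}).Reachable v c :=
  isBridge_iff.1 (isAcyclic_iff_forall_adj_isBridge.1 hT hvc)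

theorem ncard_neighborSet_eq_degree (v : V) [Fintype (G.neighborSet v)] :
    (G.neighborSet v).ncard = G.degree v := by
  rw [← card_neighborSet_eq_degree, Set.ncard_eq_toFinset_card', Set.toFinset_card]

section Counting

open Finset

theorem card_le_sum_card_filter_adj [DecidableRel T.Adj] {A B : Finset V}
    (h : ∀ a ∈ A, ∃ b ∈ B, T.Adj a b) : #A ≤ ∑ b ∈ B, #{a ∈ A | T.Adj a b} := by
  classical
  calc #A ≤ #(B.biUnion fun b => {a ∈ A | T.Adj a b}) := by
        refine card_le_card fun a ha => ?_
        obtain ⟨b, hb, hab⟩ := h a ha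
        exact mem_biUnion.2 ⟨b, hb, mem_filter.2 ⟨ha, hab⟩⟩
    _ ≤ _ := card_biUnion_le

variable [Fintype V]

theorem card_filter_adj_le [DecidableRel T.Adj] (A : Finset V) (b : V) :
    #{a ∈ A | T.Adj a b} ≤ (T.neighborSet b).ncard := by
  rw [← Set.ncard_coe_finset]
  exact Set.ncard_le_ncard (fun a ha => (mem_filter.1 ha).2.symm) (Set.toFinite _)

theorem card_filter_adj_add_le [DecidableRel T.Adj] {A : Finset V} {b w : V} (hbw : T.Adj b w)
    (hw : w ∉ A) : #{a ∈ A | T.Adj a b} + 1 ≤ (T.neighborSet b).ncard := by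
  rw [← Set.ncard_coe_finset, ← Set.ncard_insert_of_notMem (a := w) (by simp [hw])]
  refine Set.ncard_le_ncard ?_ (Set.toFinite _)
  rintro a (rfl | ha)
  · exact hbw
  · exact (mem_filter.1 ha).2.symm

theorem IsTree.sum_ncard_neighborSet_add_two (hT : T.IsTree) :
    ∑ v, (T.neighborSet v).ncard + 2 = 2 * Fintype.card V := by
  classical
  simp_rw [ncard_neighborSet_eq_degree, sum_degrees_eq_twice_card_edges, ← hT.card_edgeFinset]
  ring

open scoped Classical in
theorem IsTree.sum_ncard_neighborSet_ne_two_add_two (hT : T.IsTree) :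
    ∑ v with (T.neighborSet v).ncard ≠ 2, (T.neighborSet v).ncard + 2 =
      2 * #{v | (T.neighborSet v).ncard ≠ 2} := by
  have hsum := hT.sum_ncard_neighborSet_add_two
  have hcard := card_filter_add_card_filter_not (s := univ) fun v => (T.neighborSet v).ncard ≠ 2
  rw [← sum_filter_add_sum_filter_not univ fun v => (T.neighborSet v).ncard ≠ 2,
    sum_congr rfl fun v hv => not_not.1 (mem_filter.1 hv).2, sum_const, smul_eq_mul] at hsum
  rw [card_univ] at hcard
  simp only [ne_eq, not_not] at hsum hcard ⊢
  omega

open scoped Classical in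
theorem IsTree.card_ne_two_add_two_le [Nontrivial V] (hT : T.IsTree) :
    #{v | (T.neighborSet v).ncard ≠ 2} + 2 ≤ 2 * #{v | (T.neighborSet v).ncard = 1} := by
  have hpos (v : V) : 1 ≤ (T.neighborSet v).ncard := by
    rw [ncard_neighborSet_eq_degree]
    exact hT.connected.preconnected.degree_pos_of_nontrivial v
  have hleaf : #{v | (T.neighborSet v).ncard = 1} =
      ∑ v with (T.neighborSet v).ncard ≠ 2, if (T.neighborSet v).ncard = 1 then 1 else 0 := by
    rw [sum_ite, sum_const_zero, add_zero, sum_const, smul_eq_mul, mul_one, filter_filter]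
    congr 2; ext v; omega
  have h3 : 3 * #{v | (T.neighborSet v).ncard ≠ 2} ≤
      ∑ v with (T.neighborSet v).ncard ≠ 2,
        ((T.neighborSet v).ncard + 2 * if (T.neighborSet v).ncard = 1 then 1 else 0) := by
    rw [mul_comm, ← smul_eq_mul, ← sum_const]
    refine sum_le_sum fun v hv => ?_
    have := hpos v
    have := (mem_filter.1 hv).2
    split_ifs <;> omega
  rw [sum_add_distrib, ← mul_sum, ← hleaf] at h3
  have := hT.sum_ncard_neighborSet_ne_two_add_two
  omega

end Counting

def swapEdge (T : SimpleGraph V) (v c x : V) : SimpleGraph V :=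
  T.deleteEdges {s(v, c)} ⊔ edge v x

section swapEdge

variable {v c x : V}

theorem swapEdge_adj {a b : V} :
    (T.swapEdge v c x).Adj a b ↔
      T.Adj a b ∧ s(a, b) ≠ s(v, c) ∨ (a = v ∧ b = x ∨ a = x ∧ b = v) ∧ a ≠ b := by
  simp [swapEdge, edge_adj]

theorem swapEdge_le (hT : T ≤ G) (hvx : G.Adj v x) : T.swapEdge v c x ≤ G :=
  sup_le ((deleteEdges_le _).trans hT) ((edge_le_iff _).2 (Or.inr hvx))

theorem IsTree.swapEdge (hT : T.IsTree) (hvc : T.Adj v c)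
    (hcx : (T.deleteEdges {s(v, c)}).Reachable c x) : (T.swapEdge v c x).IsTree := by
  -- `vc` is a bridge and `x` lies on the side of `c`, so `vx` reconnects the two sides.
  have hsep := not_reachable_deleteEdges_of_isAcyclic hT.isAcyclic hvc
  have hvx : v ≠ x := by rintro rfl; exact hsep hcx.symm
  have hdel : T.deleteEdges {s(v, c)} ≤ T.swapEdge v c x := le_sup_left
  have hvx' : (T.swapEdge v c x).Adj v x := Or.inr ((edge_adj v x v x).2 ⟨Or.inl ⟨rfl, rfl⟩, hvx⟩)
  have hvc' : (T.swapEdge v c x).Reachable v c := hvx'.reachable.trans (hcx.mono hdel).symm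
  have := hT.connected.nonempty
  refine ⟨⟨fun a b => (hT.connected.preconnected a b).of_forall_adj fun a b hab => ?_⟩,
    (hT.isAcyclic.anti (deleteEdges_le _)).sup_edge_of_not_reachable
      fun h => hsep (h.trans hcx.symm)⟩
  by_cases he : s(a, b) = s(v, c)
  · rcases Sym2.eq_iff.1 he with ⟨rfl, rfl⟩ | ⟨rfl, rfl⟩
    exacts [hvc', hvc'.symm]
  · exact (hdel ((deleteEdges_adj ..).2 ⟨hab, he⟩)).reachable

theorem neighborSet_swapEdge_of_ne {u : V} (hu : u ≠ v) (hux : u ≠ x) (huc : u ≠ c) :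
    (T.swapEdge v c x).neighborSet u = T.neighborSet u := by
  ext b
  simp only [mem_neighborSet, swapEdge_adj]
  grind

theorem neighborSet_swapEdge_left (hvx : v ≠ x) :
    (T.swapEdge v c x).neighborSet v = insert x (T.neighborSet v \ {c}) := by
  ext b
  simp only [mem_neighborSet, swapEdge_adj, Set.mem_insert_iff, Set.mem_sdiff,
    Set.mem_singleton_iff]
  grind [Adj.ne]

theorem neighborSet_swapEdge_right (hcv : c ≠ v) (hxc : x ≠ c) :
    (T.swapEdge v c x).neighborSet c = T.neighborSet c \ {v} := by
  ext b
  simp only [mem_neighborSet, swapEdge_adj, Set.mem_sdiff, Set.mem_singleton_iff]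
  grind

theorem neighborSet_swapEdge_new (hvx : v ≠ x) (hxc : x ≠ c) :
    (T.swapEdge v c x).neighborSet x = insert v (T.neighborSet x) := by
  ext b
  simp only [mem_neighborSet, swapEdge_adj, Set.mem_insert_iff]
  grind [Adj.ne]

variable [Finite V]

theorem ncard_neighborSet_swapEdge_of_ne (hvc : T.Adj v c) (hvx : ¬T.Adj v x) {u : V}
    (hux : u ≠ x) (huc : u ≠ c) :
    ((T.swapEdge v c x).neighborSet u).ncard = (T.neighborSet u).ncard := by
  obtain rfl | hu := eq_or_ne u v
  · rw [neighborSet_swapEdge_left hux, Set.ncard_insert_of_notMem (fun h => hvx h.1),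
      Set.ncard_sdiff_singleton_add_one (show c ∈ T.neighborSet u from hvc)]
  · rw [neighborSet_swapEdge_of_ne hu hux huc]

theorem ncard_neighborSet_swapEdge_right (hvc : T.Adj v c) (hxc : x ≠ c) :
    ((T.swapEdge v c x).neighborSet c).ncard + 1 = (T.neighborSet c).ncard := by
  rw [neighborSet_swapEdge_right hvc.ne' hxc,
    Set.ncard_sdiff_singleton_add_one (show v ∈ T.neighborSet c from hvc.symm)]

theorem ncard_neighborSet_swapEdge_new (hvx : ¬T.Adj v x) (hvx' : v ≠ x) (hxc : x ≠ c) :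
    ((T.swapEdge v c x).neighborSet x).ncard = (T.neighborSet x).ncard + 1 := by
  rw [neighborSet_swapEdge_new hvx' hxc, Set.ncard_insert_of_notMem (fun h => hvx h.symm)]

theorem not_reachable_deleteEdges_swapEdge {v' : V} (hc : (T.neighborSet c).ncard = 2)
    (hvc : T.Adj v c) (hv'c : T.Adj v' c) (hne : v ≠ v') (hcx : c ≠ x) :
    ¬((T.swapEdge v c x).deleteEdges {s(v', c)}).Reachable c x := by
  intro hreach
  obtain ⟨w, hw⟩ := hreach.nonempty_neighborSet_left hcx
  rw [mem_neighborSet, deleteEdges_adj, swapEdge_adj, Set.mem_singleton_iff, Sym2.eq_iff,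
    Ne, Sym2.eq_iff] at hw
  have hcw : T.Adj c w ∧ w ∉ ({v, v'} : Set V) := by grind [Adj.ne]
  have hsub : {w, v, v'} ⊆ T.neighborSet c := by
    rintro u (rfl | rfl | rfl)
    exacts [hcw.1, hvc.symm, hv'c.symm]
  have := Set.ncard_le_ncard hsub (Set.toFinite _)
  rw [Set.ncard_insert_of_notMem hcw.2, Set.ncard_pair hne] at this
  omega

end swapEdge

end SimpleGraph

namespace CMCPaper

open SimpleGraph Finset

variable {V : Type*} {G T : SimpleGraph V} {v c x : V}

def leafSet (T : SimpleGraph V) : Set V := {v | (T.neighborSet v).ncard = 1}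

theorem mem_leafSet : v ∈ leafSet T ↔ (T.neighborSet v).ncard = 1 := Iff.rfl

structure IsMaxLeafSpanningTree (G T : SimpleGraph V) : Prop where
  le : T ≤ G
  isTree : T.IsTree
  ncard_leafSet_le : ∀ T' ≤ G, T'.IsTree → (leafSet T').ncard ≤ (leafSet T).ncard

def IsInnerDegTwo (T : SimpleGraph V) (v : V) : Prop :=
  (T.neighborSet v).ncard = 2 ∧ ∀ w, T.Adj v w → (T.neighborSet w).ncard = 2

section Exchange

variable [Finite V]

theorem exists_isMaxLeafSpanningTree (hG : G.Connected) : ∃ T, IsMaxLeafSpanningTree G T := by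
  obtain ⟨T₀, hT₀⟩ := hG.exists_isTree_le
  obtain ⟨T, ⟨hTG, hT⟩, hmax⟩ := Set.exists_max_image {T | T ≤ G ∧ T.IsTree}
    (fun T => (leafSet T).ncard) (Set.toFinite _) ⟨T₀, hT₀⟩
  exact ⟨T, hTG, hT, fun T' hT'G hT' => hmax T' ⟨hT'G, hT'⟩⟩

theorem insert_sdiff_leafSet_subset_leafSet_swapEdge (hvc : T.Adj v c) (hvx : ¬T.Adj v x)
    (hc : (T.neighborSet c).ncard = 2) :
    insert c (leafSet T \ {x}) ⊆ leafSet (T.swapEdge v c x) := by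
  have hxc : x ≠ c := by rintro rfl; exact hvx hvc
  rintro u (rfl | ⟨hu, hux⟩)
  · have := ncard_neighborSet_swapEdge_right hvc hxc
    rw [mem_leafSet]
    omega
  · have huc : u ≠ c := by rintro rfl; rw [mem_leafSet, hc] at hu; omega
    rwa [mem_leafSet, ncard_neighborSet_swapEdge_of_ne hvc hvx hux huc]

theorem IsMaxLeafSpanningTree.mem_leafSet_of_swapEdge (hT : IsMaxLeafSpanningTree G T)
    (hvx : G.Adj v x) (hvxT : ¬T.Adj v x) (hvc : T.Adj v c)
    (hcx : (T.deleteEdges {s(v, c)}).Reachable c x) (hc : (T.neighborSet c).ncard = 2) :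
    x ∈ leafSet T := by
  by_contra hx
  have hcL : c ∉ leafSet T := by rw [mem_leafSet, hc]; omega
  have hsub := insert_sdiff_leafSet_subset_leafSet_swapEdge hvc hvxT hc
  rw [Set.sdiff_singleton_eq_self hx] at hsub
  have hlt := Set.ncard_le_ncard hsub (Set.toFinite _)
  rw [Set.ncard_insert_of_notMem hcL] at hlt
  have := hT.ncard_leafSet_le _ (swapEdge_le hT.le hvx) (hT.isTree.swapEdge hvc hcx)
  omega

theorem IsMaxLeafSpanningTree.swapEdge (hT : IsMaxLeafSpanningTree G T)
    (hvx : G.Adj v x) (hvxT : ¬T.Adj v x) (hvc : T.Adj v c)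
    (hcx : (T.deleteEdges {s(v, c)}).Reachable c x) (hc : (T.neighborSet c).ncard = 2) :
    IsMaxLeafSpanningTree G (T.swapEdge v c x) where
  le := swapEdge_le hT.le hvx
  isTree := hT.isTree.swapEdge hvc hcx
  ncard_leafSet_le T' hT'G hT' := by
    have hx := hT.mem_leafSet_of_swapEdge hvx hvxT hvc hcx hc
    have hcL : c ∉ leafSet T \ {x} := fun h => by
      have := mem_leafSet.1 h.1; omega
    calc (leafSet T').ncard ≤ (leafSet T).ncard := hT.ncard_leafSet_le T' hT'G hT'
      _ = (insert c (leafSet T \ {x})).ncard := by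
        rw [Set.ncard_insert_of_notMem hcL, Set.ncard_sdiff_singleton_add_one hx]
      _ ≤ _ := Set.ncard_le_ncard (insert_sdiff_leafSet_subset_leafSet_swapEdge hvc hvxT hc)

theorem IsMaxLeafSpanningTree.mem_leafSet_of_adj (hT : IsMaxLeafSpanningTree G T)
    (hv : ∀ w, T.Adj v w → (T.neighborSet w).ncard = 2) (hvx : G.Adj v x) (hvxT : ¬T.Adj v x) :
    x ∈ leafSet T := by
  obtain ⟨c, hvc, hcx⟩ :=
    (hT.isTree.connected.preconnected v x).exists_adj_reachable_deleteEdges hvx.ne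
  exact hT.mem_leafSet_of_swapEdge hvx hvxT hvc hcx (hv c hvc)

/- Swapping `vc` for `vx` keeps the number of leaves, so it yields a maximum-leaf spanning tree in
which `x` has degree two; the same argument for `v'` in that tree says `x` is a leaf there. -/
theorem IsMaxLeafSpanningTree.eq_of_adj (hT : IsMaxLeafSpanningTree G T) {v' : V}
    (hv : ∀ w, T.Adj v w → (T.neighborSet w).ncard = 2)
    (hv' : ∀ w, T.Adj v' w → (T.neighborSet w).ncard = 2)
    (hvx : G.Adj v x) (hvxT : ¬T.Adj v x) (hv'x : G.Adj v' x) (hv'xT : ¬T.Adj v' x) :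
    v = v' := by
  by_contra hne
  have hx := mem_leafSet.1 (hT.mem_leafSet_of_adj hv hvx hvxT)
  obtain ⟨c, hvc, hcx⟩ :=
    (hT.isTree.connected.preconnected v x).exists_adj_reachable_deleteEdges hvx.ne
  have hc := hv c hvc
  have hxc : x ≠ c := by rintro rfl; exact hvxT hvc
  set T₁ := T.swapEdge v c x
  have hT₁ : IsMaxLeafSpanningTree G T₁ := hT.swapEdge hvx hvxT hvc hcx hc
  have hx₁ : (T₁.neighborSet x).ncard = 2 := by
    rw [ncard_neighborSet_swapEdge_new hvxT hvx.ne hxc, hx]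
  have hv'x₁ : ¬T₁.Adj v' x := by
    rw [swapEdge_adj]
    grind [Adj.ne]
  obtain ⟨c', hv'c'₁, hc'x₁⟩ :=
    (hT₁.isTree.connected.preconnected v' x).exists_adj_reachable_deleteEdges hv'x.ne
  have hv'c' : T.Adj v' c' := by
    rcases swapEdge_adj.1 hv'c'₁ with h | h
    · exact h.1
    · grind [Adj.ne]
  have hc' := hv' c' hv'c'
  have hc'x : c' ≠ x := by rintro rfl; omega
  have hc'c : c' ≠ c := by
    rintro rfl
    exact not_reachable_deleteEdges_swapEdge hc hvc hv'c' hne hc'x hc'x₁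
  have := hT₁.mem_leafSet_of_swapEdge hv'x hv'x₁ hv'c'₁ hc'x₁
    (by rwa [ncard_neighborSet_swapEdge_of_ne hvc hvxT hc'x hc'c])
  rw [mem_leafSet, hx₁] at this
  omega

end Exchange

theorem NoDeg2Path3.exists_adj_ncard_neighborSet_ne_two (hG : NoDeg2Path3 G) (hTG : T ≤ G)
    (hvT : (T.neighborSet v).ncard = 2) (hvG : (G.neighborSet v).ncard = 2) :
    ∃ u, T.Adj v u ∧ (G.neighborSet u).ncard ≠ 2 := by
  obtain ⟨u₁, u₂, hne, hN⟩ := Set.ncard_eq_two.1 hvT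
  have h₁ : T.Adj v u₁ := by rw [← mem_neighborSet, hN]; exact Set.mem_insert _ _
  have h₂ : T.Adj v u₂ := by rw [← mem_neighborSet, hN]; exact Set.mem_insert_of_mem _ rfl
  by_cases hu₁ : (G.neighborSet u₁).ncard = 2
  · exact ⟨u₂, h₂, fun hu₂ => hG ⟨u₁, v, u₂, hne, (hTG h₁).symm, hTG h₂, hu₁, hvG, hu₂⟩⟩
  · exact ⟨u₁, h₁, hu₁⟩

variable [Fintype V]

open scoped Classical in
theorem card_not_isInnerDegTwo_le (T : SimpleGraph V) :
    #{v | (T.neighborSet v).ncard = 2 ∧ ¬IsInnerDegTwo T v} ≤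
      ∑ w with (T.neighborSet w).ncard ≠ 2, (T.neighborSet w).ncard := by
  refine (card_le_sum_card_filter_adj fun v hv => ?_).trans
    (sum_le_sum fun w _ => card_filter_adj_le _ w)
  obtain ⟨hv2, hvi⟩ := (mem_filter.1 hv).2
  simp only [IsInnerDegTwo, hv2, true_and, not_forall] at hvi
  obtain ⟨w, hvw, hw⟩ := hvi
  exact ⟨w, mem_filter.2 ⟨mem_univ w, hw⟩, hvw⟩

open scoped Classical in
theorem card_isInnerDegTwo_eq_two_le (hTG : T ≤ G) (hG : NoDeg2Path3 G) :
    #{v | IsInnerDegTwo T v ∧ (G.neighborSet v).ncard = 2} ≤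
      2 * #{v | IsInnerDegTwo T v ∧ (G.neighborSet v).ncard ≠ 2} +
        #{v | (T.neighborSet v).ncard = 2 ∧ ¬IsInnerDegTwo T v} := by
  set A := ({v | IsInnerDegTwo T v ∧ (G.neighborSet v).ncard = 2} : Finset V)
  set C := ({v | IsInnerDegTwo T v ∧ (G.neighborSet v).ncard ≠ 2} : Finset V)
  set B := ({v | (T.neighborSet v).ncard = 2 ∧ ¬IsInnerDegTwo T v} : Finset V)
  have hcover : ∀ v ∈ A, ∃ u ∈ C ∪ B, T.Adj v u := by
    intro v hv
    obtain ⟨⟨hv2, hvn⟩, hvg⟩ := (mem_filter.1 hv).2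
    have hmem (u : V) (hvu : T.Adj v u) (hu : (G.neighborSet u).ncard ≠ 2) : u ∈ C ∪ B := by
      by_cases hi : IsInnerDegTwo T u
      · exact mem_union_left _ (mem_filter.2 ⟨mem_univ u, hi, hu⟩)
      · exact mem_union_right _ (mem_filter.2 ⟨mem_univ u, hvn u hvu, hi⟩)
    obtain ⟨u, hvu, hu⟩ := hG.exists_adj_ncard_neighborSet_ne_two hTG hv2 hvg
    exact ⟨u, hmem u hvu hu, hvu⟩
  have hCB : Disjoint C B := disjoint_filter.2 fun _ _ hC hB => hB.2 hC.1
  calc #A ≤ ∑ u ∈ C ∪ B, #{a ∈ A | T.Adj a u} := card_le_sum_card_filter_adj hcover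
    _ = ∑ u ∈ C, #{a ∈ A | T.Adj a u} + ∑ u ∈ B, #{a ∈ A | T.Adj a u} := sum_union hCB
    _ ≤ ∑ _u ∈ C, 2 + ∑ _u ∈ B, 1 := by
      gcongr with u hu u hu
      · exact (card_filter_adj_le A u).trans (mem_filter.1 hu).2.1.1.le
      · obtain ⟨hu2, hui⟩ := (mem_filter.1 hu).2
        simp only [IsInnerDegTwo, hu2, true_and, not_forall] at hui
        obtain ⟨w, huw, hw⟩ := hui
        have hwA : w ∉ A := fun h => hw (mem_filter.1 h).2.1.1
        have := card_filter_adj_add_le huw hwA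
        omega
    _ = 2 * #C + #B := by simp [mul_comm]

open scoped Classical in
theorem IsMaxLeafSpanningTree.card_isInnerDegTwo_ne_two_le (hT : IsMaxLeafSpanningTree G T) :
    #{v | IsInnerDegTwo T v ∧ (G.neighborSet v).ncard ≠ 2} ≤
      #{v | (T.neighborSet v).ncard = 1} := by
  refine card_le_card_of_forall_subsingleton (fun v x => G.Adj v x ∧ ¬T.Adj v x)
    (fun v hv => ?_) fun x _ v hv v' hv' => ?_
  · obtain ⟨⟨hv2, hvn⟩, hvg⟩ := (mem_filter.1 hv).2
    have hsub : T.neighborSet v ⊂ G.neighborSet v :=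
      LE.le.ssubset_of_ne (fun w h => hT.le h) fun h => hvg (h ▸ hv2)
    obtain ⟨x, hxG, hxT⟩ := Set.exists_of_ssubset hsub
    exact ⟨x, mem_filter.2 ⟨mem_univ x, hT.mem_leafSet_of_adj hvn hxG hxT⟩, hxG, hxT⟩
  · exact hT.eq_of_adj (mem_filter.1 hv.1).2.1.2 (mem_filter.1 hv'.1).2.1.2
      hv.2.1 hv.2.2 hv'.2.1 hv'.2.2

theorem IsMaxLeafSpanningTree.card_add_fourteen_le (hT : IsMaxLeafSpanningTree G T)
    (hG : NoDeg2Path3 G) (hn : 2 ≤ Fintype.card V) :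
    Fintype.card V + 14 ≤ 13 * (leafSet T).ncard := by
  classical
  have : Nontrivial V := Fintype.one_lt_card_iff_nontrivial.1 hn
  have hL : (leafSet T).ncard = #{v | (T.neighborSet v).ncard = 1} := by
    rw [← Set.ncard_coe_finset, coe_filter]
    simp only [mem_univ, true_and, leafSet]
  have hpart : Fintype.card V = #{v | (T.neighborSet v).ncard ≠ 2} +
      #{v | IsInnerDegTwo T v ∧ (G.neighborSet v).ncard = 2} +
      #{v | IsInnerDegTwo T v ∧ (G.neighborSet v).ncard ≠ 2} +
      #{v | (T.neighborSet v).ncard = 2 ∧ ¬IsInnerDegTwo T v} := by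
    simp only [card_filter, ← sum_add_distrib, Fintype.card_eq_sum_ones]
    refine sum_congr rfl fun v _ => ?_
    have : IsInnerDegTwo T v → (T.neighborSet v).ncard = 2 := And.left
    split_ifs <;> grind
  have := hT.isTree.card_ne_two_add_two_le
  have := hT.isTree.sum_ncard_neighborSet_ne_two_add_two
  have := card_not_isInnerDegTwo_le T
  have := card_isInnerDegTwo_eq_two_le hT.le hG
  have := hT.card_isInnerDegTwo_ne_two_le
  omega

/-- A connected graph on `n ≥ 2` vertices with no path on three vertices
all of degree 2 has a spanning tree with at least `n/14` leaves. -/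
theorem spanning_tree_many_leaves {V : Type*} [Fintype V]
    (G : SimpleGraph V) (hconn : G.Connected)
    (hn : 2 ≤ Fintype.card V)
    (hG : NoDeg2Path3 G) :
    ∃ T : SimpleGraph V, T ≤ G ∧ T.IsTree ∧
      (Fintype.card V : ℝ) / 14 ≤ ({v : V | (T.neighborSet v).ncard = 1}).ncard := by
  obtain ⟨T, hT⟩ := exists_isMaxLeafSpanningTree hconn
  refine ⟨T, hT.le, hT.isTree, ?_⟩
  have := hT.card_add_fourteen_le hG hn
  rw [div_le_iff₀ (by norm_num)]
  exact_mod_cast (by omega : Fintype.card V ≤ (leafSet T).ncard * 14)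

end CMCPaper
end

section
/- Let G = (V,E) be a finite simple undirected graph on at least two vertices with edge weights w : E → {0,1}, and let v ∈ V be a vertex all of whose incident edges have weight 0. Let G' be the graph on vertex set V \ {v} whose edge set consists of all edges of G not incident to v, together with a new edge {u, u'} for every pair of distinct neighbors u, u' of v with {u, u'} ∉ E; the weight function w' agrees with w on the edges of G and assigns weight 0 to every newly added edge. Then for every ψ ≥ 0: G' contains a nonempty S' ⊆ V \ {v} with G'[S'] connected and w'(δ_{G'}(S')) ≥ ψ if and only if G contains a nonempty S ⊆ V with G[S] connected and w(δ_G(S)) ≥ ψ. -/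
/-!
Every edge at `v` weighs 0 in `G`, hence also in `G'`, and new edges of `G'` weigh 0. So the
cut of `S` in `G` and the cut of `S'` in `G'` weigh the same whenever `S` and `S'` agree
outside `v`: their edges avoiding `v` coincide. Connectivity transfers both ways. Contracting
`v` onto a neighbour `u₀` in `S` maps `G[S]` onto `G'[S \ {v}]`, sending each edge to an edge
or a loop, because all other neighbours of `v` are adjacent to `u₀` in `G'`. Conversely, a new
edge of `G'[S']` is replaced by the path through `v` in `G[S' ∪ {v}]`. The only set not covered
is `S = {v}`, whose cut weighs 0 and is matched by any other single vertex.
-/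

namespace CMCPaper

variable {V : Type*}

open SimpleGraph

theorem _root_.SimpleGraph.Reachable.map_of_forall_adj {α β : Type*} {G : SimpleGraph α}
    {H : SimpleGraph β} (f : α → β) (hf : ∀ a b, G.Adj a b → H.Reachable (f a) (f b))
    {a b : α} (h : G.Reachable a b) : H.Reachable (f a) (f b) := by
  rw [reachable_iff_reflTransGen] at h ⊢
  exact h.lift' f fun a b hab => (reachable_iff_reflTransGen _ _).1 (hf a b hab)

theorem _root_.SimpleGraph.Connected.of_surjective_of_forall_adj {α β : Type*}
    {G : SimpleGraph α} {H : SimpleGraph β} (hG : G.Connected) (f : α → β)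
    (hsurj : Function.Surjective f) (hf : ∀ a b, G.Adj a b → H.Reachable (f a) (f b)) :
    H.Connected := by
  have : Nonempty β := hG.nonempty.map f
  refine ⟨fun x y => ?_⟩
  obtain ⟨⟨a, rfl⟩, ⟨b, rfl⟩⟩ := And.intro (hsurj x) (hsurj y)
  exact (hG a b).map_of_forall_adj f hf

lemma connected_induce_of_adj_imp {G H : SimpleGraph V} {S : Set V}
    (hGH : ∀ a ∈ S, ∀ b ∈ S, G.Adj a b → H.Adj a b) (h : (G.induce S).Connected) :
    (H.induce S).Connected :=
  h.mono fun a b hab => hGH _ a.2 _ b.2 hab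

lemma mem_cutSet_iff (G : SimpleGraph V) (S : Set V) (u u' : V) :
    s(u, u') ∈ cutSet G S ↔ G.Adj u u' ∧ ((u ∈ S ∧ u' ∉ S) ∨ (u' ∈ S ∧ u ∉ S)) := by
  simp only [cutSet, Set.mem_ofPred_eq, SimpleGraph.mem_edgeSet, Sym2.eq, Sym2.rel_iff',
    Prod.mk.injEq, Prod.swap_prod_mk]
  constructor
  · rintro ⟨hadj, a, b, (⟨rfl, rfl⟩ | ⟨rfl, rfl⟩), ha, hb⟩ <;> tauto
  · rintro ⟨hadj, (⟨hu, hu'⟩ | ⟨hu', hu⟩)⟩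
    · exact ⟨hadj, u, u', Or.inl ⟨rfl, rfl⟩, hu, hu'⟩
    · exact ⟨hadj, u', u, Or.inr ⟨rfl, rfl⟩, hu', hu⟩

lemma cutWeight_singleton_eq_zero {G : SimpleGraph V} {w : Sym2 V → ℕ} {v : V}
    (hv : ∀ e ∈ G.edgeSet, v ∈ e → w e = 0) : cutWeight G w {v} = 0 :=
  finsum_mem_of_eqOn_zero fun _ ⟨he, a, b, hab, ha, _⟩ =>
    hv _ he (by rw [hab, Set.mem_singleton_iff.1 ha]; exact Sym2.mem_mk_left v b)

lemma cutWeight_eq_of_diff_singleton_eq {G G' : SimpleGraph V} {w w' : Sym2 V → ℕ} {v : V}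
    (hv : ∀ e ∈ G.edgeSet, v ∈ e → w e = 0)
    (hold : ∀ a b, G.Adj a b → a ≠ v → b ≠ v → G'.Adj a b)
    (hw'old : ∀ e ∈ G.edgeSet, w' e = w e) (hw'new : ∀ e ∉ G.edgeSet, w' e = 0)
    {S S' : Set V} (hSS' : S \ {v} = S' \ {v}) :
    cutWeight G w S = cutWeight G' w' S' := by
  have hw'v : ∀ e, v ∈ e → w' e = 0 := fun e hve => by
    by_cases he : e ∈ G.edgeSet
    · rw [hw'old e he, hv e he hve]
    · exact hw'new e he
  unfold cutWeight
  rw [finsum_mem_def, finsum_mem_def]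
  congr 1
  funext e
  induction e using Sym2.ind with
  | _ u u' =>
  by_cases hve : v ∈ s(u, u')
  · rw [Set.indicator_apply_eq_zero.2 fun h => hv _ h.1 hve,
      Set.indicator_apply_eq_zero.2 fun _ => hw'v _ hve]
  by_cases he : G.Adj u u'
  · have hu : u ≠ v := fun h => hve (h ▸ Sym2.mem_mk_left u u')
    have hu' : u' ≠ v := fun h => hve (h ▸ Sym2.mem_mk_right u u')
    have hS : ∀ x, x ≠ v → (x ∈ S ↔ x ∈ S') := fun x hx => by
      simpa [hx] using Set.ext_iff.1 hSS' x
    have hcut : s(u, u') ∈ cutSet G S ↔ s(u, u') ∈ cutSet G' S' := by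
      rw [mem_cutSet_iff, mem_cutSet_iff, hS u hu, hS u' hu']
      simp [he, hold u u' he hu hu']
    by_cases hc : s(u, u') ∈ cutSet G S
    · rw [Set.indicator_of_mem hc, Set.indicator_of_mem (hcut.1 hc), hw'old _ he]
    · rw [Set.indicator_of_notMem hc, Set.indicator_of_notMem (mt hcut.2 hc)]
  · rw [Set.indicator_of_notMem fun h => he h.1, Set.indicator_apply_eq_zero.2 fun _ => hw'new _ he]

section

variable {G G' : SimpleGraph V} {v : V}

lemma connected_induce_diff_singleton_of_mem
    (hold : ∀ a b, G.Adj a b → a ≠ v → b ≠ v → G'.Adj a b)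
    (hnew : ∀ a b, a ≠ b → G.Adj v a → G.Adj v b → G'.Adj a b)
    {S : Set V} (hvS : v ∈ S) (hS : (S \ {v}).Nonempty) (h : (G.induce S).Connected) :
    (G'.induce (S \ {v})).Connected := by
  classical
  obtain ⟨y, hyS, hyv⟩ := hS
  have : Nontrivial S := ⟨⟨v, hvS⟩, ⟨y, hyS⟩, fun h => hyv (congrArg Subtype.val h).symm⟩
  obtain ⟨u₀, hvu₀⟩ := h.preconnected.exists_adj_of_nontrivial ⟨v, hvS⟩
  have hu₀v : u₀.1 ≠ v := (G.ne_of_adj hvu₀).symm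
  let f : S → ↥(S \ {v}) := fun x => if hx : x.1 = v then ⟨u₀, u₀.2, hu₀v⟩ else ⟨x, x.2, hx⟩
  have hf_of_ne : ∀ x : S, (hx : x.1 ≠ v) → f x = ⟨x, x.2, hx⟩ := fun x hx => dif_neg hx
  have hf_v : ∀ x : S, x.1 = v → f x = ⟨u₀, u₀.2, hu₀v⟩ := fun x hx => dif_pos hx
  have hstep (a b : S) (hab : G.Adj a b) (ha : a.1 = v) :
      (G'.induce (S \ {v})).Reachable (f a) (f b) := by
    have hb : b.1 ≠ v := ha ▸ (G.ne_of_adj hab).symm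
    rw [hf_v a ha, hf_of_ne b hb]
    by_cases hu₀b : u₀.1 = b.1
    · obtain rfl : u₀ = b := Subtype.ext hu₀b
      rfl
    · exact Adj.reachable (hnew _ _ hu₀b hvu₀ (ha ▸ hab))
  refine h.of_surjective_of_forall_adj f (fun x => ⟨⟨x, x.2.1⟩, hf_of_ne ⟨x, x.2.1⟩ x.2.2⟩) ?_
  intro a b hab
  by_cases ha : a.1 = v
  · exact hstep a b hab ha
  by_cases hb : b.1 = v
  · exact (hstep b a hab.symm hb).symm
  rw [hf_of_ne a ha, hf_of_ne b hb]
  exact Adj.reachable (hold _ _ hab ha hb)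

lemma connected_induce_insert
    (hsub : ∀ a b, G'.Adj a b → G.Adj a b ∨ (G.Adj v a ∧ G.Adj v b))
    {S' : Set V} (h : (G'.induce S').Connected) {u : V} (hu : u ∈ S') (hvu : G.Adj v u) :
    (G.induce (insert v S')).Connected := by
  let ι : S' → ↥(insert v S') := fun x => ⟨x, Set.mem_insert_of_mem v x.2⟩
  let v' : ↥(insert v S') := ⟨v, Set.mem_insert v S'⟩
  have hreach {a b : ↥(insert v S')} (hab : G.Adj a b) : (G.induce (insert v S')).Reachable a b :=
    Adj.reachable hab
  have hstep (a b : S') (hab : G'.Adj a b) : (G.induce (insert v S')).Reachable (ι a) (ι b) := by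
    rcases hsub _ _ hab with hab | ⟨hva, hvb⟩
    · exact hreach hab
    · exact (hreach (b := v') hva.symm).trans (hreach hvb)
  refine (connected_iff_exists_forall_reachable _).2 ⟨v', fun x => ?_⟩
  rcases Set.mem_insert_iff.1 x.2 with hx | hx
  · obtain rfl : x = v' := Subtype.ext hx
    rfl
  · exact (hreach (a := v') (b := ι ⟨u, hu⟩) hvu).trans
      ((h ⟨u, hu⟩ ⟨x, hx⟩).map_of_forall_adj ι hstep)

lemma connected_induce_diff_singleton
    (hold : ∀ a b, G.Adj a b → a ≠ v → b ≠ v → G'.Adj a b)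
    (hnew : ∀ a b, a ≠ b → G.Adj v a → G.Adj v b → G'.Adj a b)
    {S : Set V} (hS : (S \ {v}).Nonempty) (h : (G.induce S).Connected) :
    (G'.induce (S \ {v})).Connected := by
  by_cases hvS : v ∈ S
  · exact connected_induce_diff_singleton_of_mem hold hnew hvS hS h
  · rw [Set.sdiff_singleton_eq_self hvS]
    exact connected_induce_of_adj_imp (fun a ha b hb hab =>
      hold a b hab (ne_of_mem_of_not_mem ha hvS) (ne_of_mem_of_not_mem hb hvS)) h

lemma exists_connected_induce_of_connected_induce
    (hsub : ∀ a b, G'.Adj a b → G.Adj a b ∨ (G.Adj v a ∧ G.Adj v b))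
    {S' : Set V} (h : (G'.induce S').Connected) :
    ∃ S, S \ {v} = S' \ {v} ∧ S' ⊆ S ∧ (G.induce S).Connected := by
  by_cases hnb : ∃ u ∈ S', G.Adj v u
  · obtain ⟨u, hu, hvu⟩ := hnb
    exact ⟨insert v S', Set.insert_sdiff_of_mem S' (Set.mem_singleton v), Set.subset_insert v S',
      connected_induce_insert hsub h hu hvu⟩
  · push Not at hnb
    refine ⟨S', rfl, subset_rfl, connected_induce_of_adj_imp (fun a ha b _ hab => ?_) h⟩
    exact (hsub a b hab).resolve_right fun h => hnb a ha h.1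

end

theorem remove_zero_vertex_general {V : Type*} [Fintype V]
    (hV : 2 ≤ Fintype.card V)
    (G G' : SimpleGraph V) (w w' : Sym2 V → ℕ)
    (v : V)
    (hv : ∀ e ∈ G.edgeSet, v ∈ e → w e = 0)
    (hG' : ∀ u u' : V, G'.Adj u u' ↔
      ((G.Adj u u' ∧ u ≠ v ∧ u' ≠ v) ∨ (u ≠ u' ∧ G.Adj v u ∧ G.Adj v u')))
    (hw'old : ∀ e ∈ G.edgeSet, w' e = w e)
    (hw'new : ∀ e ∉ G.edgeSet, w' e = 0)
    (ψ : ℕ) :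
    (∃ S' : Set V, S'.Nonempty ∧ v ∉ S' ∧ (G'.induce S').Connected ∧
        ψ ≤ cutWeight G' w' S') ↔
    (∃ S : Set V, S.Nonempty ∧ (G.induce S).Connected ∧ ψ ≤ cutWeight G w S) := by
  have hold : ∀ a b, G.Adj a b → a ≠ v → b ≠ v → G'.Adj a b :=
    fun a b hab ha hb => (hG' a b).2 (.inl ⟨hab, ha, hb⟩)
  have hnew : ∀ a b, a ≠ b → G.Adj v a → G.Adj v b → G'.Adj a b :=
    fun a b hab ha hb => (hG' a b).2 (.inr ⟨hab, ha, hb⟩)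
  have hsub : ∀ a b, G'.Adj a b → G.Adj a b ∨ (G.Adj v a ∧ G.Adj v b) :=
    fun a b hab => ((hG' a b).1 hab).imp (·.1) (·.2)
  have hcut {S S' : Set V} (h : S \ {v} = S' \ {v}) : cutWeight G w S = cutWeight G' w' S' :=
    cutWeight_eq_of_diff_singleton_eq hv hold hw'old hw'new h
  constructor
  · rintro ⟨S', hne, -, hconn, hψ⟩
    obtain ⟨S, hSS', hS'S, hS⟩ := exists_connected_induce_of_connected_induce hsub hconn
    exact ⟨S, hne.mono hS'S, hS, (hcut hSS').symm ▸ hψ⟩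
  · rintro ⟨S, hne, hconn, hψ⟩
    rcases (S \ {v}).eq_empty_or_nonempty with hS | hS
    · obtain rfl : S = {v} := hne.subset_singleton_iff.1 (Set.sdiff_eq_empty.1 hS)
      obtain ⟨u, hu⟩ := Fintype.exists_ne_of_one_lt_card hV v
      refine ⟨{u}, Set.singleton_nonempty u, by simpa using hu.symm, ?_, ?_⟩
      · rw [induce_singleton_eq_top]
        exact connected_top
      · exact hψ.trans ((cutWeight_singleton_eq_zero hv).trans_le (Nat.zero_le _))
    · exact ⟨S \ {v}, hS, fun h => h.2 rfl, connected_induce_diff_singleton hold hnew hS hconn,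
        hcut sdiff_idem.symm ▸ hψ⟩

/-- Removing a vertex `v` all of whose incident edges have weight 0 and
adding 0-weight edges between all pairs of its neighbours preserves the optimum of the
{0,1}-Connected Maximum Cut problem. -/
theorem remove_zero_vertex {V : Type*} [Fintype V]
    (hV : 2 ≤ Fintype.card V)
    (G G' : SimpleGraph V) (w w' : Sym2 V → ℕ)
    (hw : ∀ e ∈ G.edgeSet, w e ≤ 1)
    (v : V)
    (hv : ∀ e ∈ G.edgeSet, v ∈ e → w e = 0)
    (hG' : ∀ u u' : V, G'.Adj u u' ↔
      ((G.Adj u u' ∧ u ≠ v ∧ u' ≠ v) ∨ (u ≠ u' ∧ G.Adj v u ∧ G.Adj v u')))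
    (hw'old : ∀ e ∈ G.edgeSet, w' e = w e)
    (hw'new : ∀ e ∉ G.edgeSet, w' e = 0)
    (ψ : ℕ) :
    (∃ S' : Set V, S'.Nonempty ∧ v ∉ S' ∧ (G'.induce S').Connected ∧
        ψ ≤ cutWeight G' w' S') ↔
    (∃ S : Set V, S.Nonempty ∧ (G.induce S).Connected ∧ ψ ≤ cutWeight G w S) :=
  remove_zero_vertex_general hV G G' w w' v hv hG' hw'old hw'new ψ

end CMCPaper
end

section
/- Let G = (V,E) be a connected finite simple undirected graph that contains no path on three vertices u–v–w with deg_G(u) = deg_G(v) = deg_G(w) = 2. Then G has a spanning tree T such that T contains no path on seven vertices all of which have degree 2 in T. -/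
namespace SimpleGraph

variable {V : Type*}

lemma neighborSet_eq_pair_of_ncard_eq_two [Finite V] {H : SimpleGraph V} {v a b : V}
    (hv : (H.neighborSet v).ncard = 2) (ha : H.Adj v a) (hb : H.Adj v b) (hab : a ≠ b) :
    H.neighborSet v = {a, b} :=
  (Set.eq_of_subset_of_ncard_le (t := H.neighborSet v) (Set.pair_subset ha hb)
    (by rw [hv, Set.ncard_pair hab])).symm

lemma exists_adj_not_adj_of_ncard_neighborSet_ne {H G : SimpleGraph V} (hHG : H ≤ G) {v : V}
    (h : (H.neighborSet v).ncard ≠ (G.neighborSet v).ncard) : ∃ x, G.Adj v x ∧ ¬ H.Adj v x := by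
  by_contra! hx
  exact h (congrArg Set.ncard (Set.Subset.antisymm (fun _ hw => hHG hw) hx))

lemma sup_edge_deleteEdges_adj {G : SimpleGraph V} {u v x y a b : V} (huv : u ≠ v) :
    ((G ⊔ edge u v).deleteEdges {s(x, y)}).Adj a b ↔
      (G.Adj a b ∨ a = u ∧ b = v ∨ a = v ∧ b = u) ∧ ¬ (a = x ∧ b = y ∨ a = y ∧ b = x) := by
  simp only [deleteEdges_adj, sup_adj, edge_adj, Set.mem_singleton_iff, Sym2.eq_iff]
  grind [Adj.ne]

lemma IsTree.sup_edge_deleteEdges [Finite V] {T : SimpleGraph V} (hT : T.IsTree) {u v x y : V}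
    (huv : u ≠ v) (hTuv : ¬ T.Adj u v) (hxy : T.Adj x y)
    (hreach : ((T ⊔ edge u v).deleteEdges {s(x, y)}).Reachable x y) :
    ((T ⊔ edge u v).deleteEdges {s(x, y)}).IsTree := by
  rw [isTree_iff_connected_and_card] at hT ⊢
  refine ⟨(hT.1.mono le_sup_left).connected_delete_edge_of_not_isBridge ?_, ?_⟩
  · exact fun h => isBridge_iff.mp h hreach
  · have hxy' : s(x, y) ∈ insert s(u, v) T.edgeSet := Set.mem_insert_of_mem _ hxy
    rw [← hT.2, edgeSet_deleteEdges, edgeSet_sup, edgeSet_edge_of_ne huv, Nat.card_coe_set_eq,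
      Nat.card_coe_set_eq, Set.union_singleton, Set.ncard_sdiff_singleton_of_mem hxy',
      Set.ncard_insert_of_notMem (s := T.edgeSet) hTuv]
    omega

lemma reachable_deleteEdges_of_isPath_cons {H : SimpleGraph V} {v b c x : V} (hvb : H.Adj v b)
    {q : H.Walk b x} (hq : (Walk.cons hvb q).IsPath) (hb : H.neighborSet b = {v, c})
    (hxb : x ≠ b) : (H.deleteEdges {s(b, c)}).Reachable c x := by
  cases q with
  | nil => exact absurd rfl hxb
  | @cons _ w _ hbw q =>
    obtain ⟨hq, hvq⟩ := (Walk.cons_isPath_iff _ _).mp hq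
    have hw : w ∈ ({v, c} : Set V) := hb ▸ hbw
    obtain rfl : w = c := hw.resolve_left fun hwv => hvq (by subst hwv; simp)
    have hbq : b ∉ q.support := ((Walk.cons_isPath_iff _ _).mp hq).2
    exact ⟨q.toDeleteEdges _ fun e he hbc => hbq (by
      rw [Set.mem_singleton_iff] at hbc
      exact q.fst_mem_support_of_mem_edges (hbc ▸ he))⟩

end SimpleGraph

namespace CMCPaper

open SimpleGraph

variable {V : Type*}

def degTwoVerts (H : SimpleGraph V) : Set V :=
  {v | (H.neighborSet v).ncard = 2}

lemma ncard_degTwoVerts_sup_edge_deleteEdges_lt [Finite V] {T : SimpleGraph V} {v b c x : V}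
    (hvb : T.Adj v b) (hbc : T.Adj b c) (hvc : v ≠ c) (hvx : v ≠ x) (hTvx : ¬ T.Adj v x)
    (hv : v ∈ degTwoVerts T) (hb : b ∈ degTwoVerts T) (hc : c ∈ degTwoVerts T) :
    (degTwoVerts ((T ⊔ edge v x).deleteEdges {s(b, c)})).ncard < (degTwoVerts T).ncard := by
  set T' := (T ⊔ edge v x).deleteEdges {s(b, c)}
  have hT'v : T'.neighborSet v = insert x (T.neighborSet v) := by
    ext w
    simp only [T', mem_neighborSet, sup_edge_deleteEdges_adj hvx, Set.mem_insert_iff]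
    grind [Adj.ne]
  have hT'b : T'.neighborSet b = {v} := by
    ext w
    have hw := congrArg (w ∈ ·) (neighborSet_eq_pair_of_ncard_eq_two hb hvb.symm hbc hvc)
    simp only [T', mem_neighborSet, sup_edge_deleteEdges_adj hvx, Set.mem_insert_iff,
      Set.mem_singleton_iff, eq_iff_iff] at hw ⊢
    grind [Adj.ne]
  have hT'u : ∀ u, u ≠ v → u ≠ x → u ≠ b → u ≠ c → T'.neighborSet u = T.neighborSet u := by
    intro u huv hux hub huc
    ext w
    simp only [T', mem_neighborSet, sup_edge_deleteEdges_adj hvx]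
    grind
  have hsub : degTwoVerts T' ⊆ insert x (degTwoVerts T \ {v, b}) := by
    intro u (hu : (T'.neighborSet u).ncard = 2)
    have huv : u ≠ v := by
      rintro rfl
      rw [hT'v, Set.ncard_insert_of_notMem (s := T.neighborSet u) hTvx, hv] at hu
      omega
    have hub : u ≠ b := by
      rintro rfl
      rw [hT'b, Set.ncard_singleton] at hu
      omega
    rcases eq_or_ne u x with hux | hux
    · exact Or.inl hux
    rcases eq_or_ne u c with rfl | huc
    · exact Or.inr ⟨hc, by simp [huv, hub]⟩
    · exact Or.inr ⟨show (T.neighborSet u).ncard = 2 by rwa [← hT'u u huv hux hub huc],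
        by simp [huv, hub]⟩
  have hvb2 : {v, b} ⊆ degTwoVerts T := Set.pair_subset hv hb
  have h2 := Set.ncard_le_ncard hvb2
  rw [Set.ncard_pair hvb.ne] at h2
  calc (degTwoVerts T').ncard ≤ (insert x (degTwoVerts T \ {v, b})).ncard :=
        Set.ncard_le_ncard hsub
    _ ≤ (degTwoVerts T \ {v, b}).ncard + 1 := Set.ncard_insert_le _ _
    _ = (degTwoVerts T).ncard - 2 + 1 := by rw [Set.ncard_sdiff hvb2, Set.ncard_pair hvb.ne]
    _ < (degTwoVerts T).ncard := by omega

lemma exists_isTree_ncard_degTwoVerts_lt_of_reachable [Finite V] {G T : SimpleGraph V}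
    (hTG : T ≤ G) (hT : T.IsTree) {v b c x : V} (hvb : T.Adj v b) (hbc : T.Adj b c) (hvc : v ≠ c)
    (hv : v ∈ degTwoVerts T) (hb : b ∈ degTwoVerts T) (hc : c ∈ degTwoVerts T)
    (hGvx : G.Adj v x) (hTvx : ¬ T.Adj v x) (hcx : (T.deleteEdges {s(b, c)}).Reachable c x) :
    ∃ T' ≤ G, T'.IsTree ∧ (degTwoVerts T').ncard < (degTwoVerts T).ncard := by
  refine ⟨(T ⊔ edge v x).deleteEdges {s(b, c)}, ?_, hT.sup_edge_deleteEdges hGvx.ne hTvx hbc ?_,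
    ncard_degTwoVerts_sup_edge_deleteEdges_lt hvb hbc hvc hGvx.ne hTvx hv hb hc⟩
  · exact (deleteEdges_le _).trans (sup_le hTG ((edge_le_iff G).mpr (Or.inr hGvx)))
  · have hbv : ((T ⊔ edge v x).deleteEdges {s(b, c)}).Adj b v :=
      (sup_edge_deleteEdges_adj hGvx.ne).mpr ⟨.inl hvb.symm, by grind [Adj.ne]⟩
    have hvx : ((T ⊔ edge v x).deleteEdges {s(b, c)}).Adj v x :=
      (sup_edge_deleteEdges_adj hGvx.ne).mpr ⟨.inr (.inl ⟨rfl, rfl⟩), by grind [Adj.ne]⟩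
    exact hbv.reachable.trans (hvx.reachable.trans (hcx.symm.mono (deleteEdges_mono le_sup_left)))

lemma exists_isTree_ncard_degTwoVerts_lt [Finite V] {G T : SimpleGraph V} (hTG : T ≤ G)
    (hT : T.IsTree) {d a v b c : V} (hda : T.Adj d a) (hav : T.Adj a v) (hvb : T.Adj v b)
    (hbc : T.Adj b c) (hdv : d ≠ v) (hab : a ≠ b) (hvc : v ≠ c) (hd : d ∈ degTwoVerts T)
    (ha : a ∈ degTwoVerts T) (hv : v ∈ degTwoVerts T) (hb : b ∈ degTwoVerts T)
    (hc : c ∈ degTwoVerts T) (hGv : (G.neighborSet v).ncard ≠ 2) :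
    ∃ T' ≤ G, T'.IsTree ∧ (degTwoVerts T').ncard < (degTwoVerts T).ncard := by
  obtain ⟨x, hGvx, hTvx⟩ :=
    exists_adj_not_adj_of_ncard_neighborSet_ne hTG ((show _ = 2 from hv).trans_ne hGv.symm)
  obtain ⟨p, hp⟩ := hT.connected.exists_isPath v x
  cases p with
  | nil => exact absurd rfl hGvx.ne
  | @cons _ w _ hvw q =>
    have hw : w ∈ ({a, b} : Set V) :=
      neighborSet_eq_pair_of_ncard_eq_two hv hav.symm hvb hab ▸ hvw
    rcases hw with rfl | rfl
    · refine exists_isTree_ncard_degTwoVerts_lt_of_reachable hTG hT hav.symm hda.symm hdv.symm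
        hv ha hd hGvx hTvx (reachable_deleteEdges_of_isPath_cons hvw hp ?_ ?_)
      · rw [neighborSet_eq_pair_of_ncard_eq_two ha hav hda.symm hdv.symm]
      · rintro rfl; exact hTvx hav.symm
    · refine exists_isTree_ncard_degTwoVerts_lt_of_reachable hTG hT hvb hbc hvc
        hv hb hc hGvx hTvx (reachable_deleteEdges_of_isPath_cons hvw hp ?_ ?_)
      · exact neighborSet_eq_pair_of_ncard_eq_two hb hvb.symm hbc hvc
      · rintro rfl; exact hTvx hvb

/-- A connected graph with no path on three vertices all of degree 2 has a
spanning tree `T` containing no path on seven vertices all of degree 2 in `T`. -/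
theorem spanning_tree_no_long_deg2_path {V : Type*} [Fintype V]
    (G : SimpleGraph V) (hconn : G.Connected)
    (hG : NoDeg2Path3 G) :
    ∃ T : SimpleGraph V, T ≤ G ∧ T.IsTree ∧
      ¬ ∃ p : Fin 7 → V, Function.Injective p ∧
          (∀ i : Fin 6, T.Adj (p i.castSucc) (p i.succ)) ∧
          (∀ i : Fin 7, (T.neighborSet (p i)).ncard = 2) := by
  obtain ⟨T, ⟨hTG, hT⟩, hmin⟩ := (measure fun T : SimpleGraph V => (degTwoVerts T).ncard).wf.has_min
    {T | T ≤ G ∧ T.IsTree} hconn.exists_isTree_le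
  refine ⟨T, hTG, hT, fun ⟨p, hinj, hadj, hdeg⟩ => ?_⟩
  obtain ⟨i, hi, hGi⟩ : ∃ i, ∃ hi : i ≤ 2, (G.neighborSet (p ⟨i + 2, by omega⟩)).ncard ≠ 2 := by
    by_contra! h
    exact hG ⟨p ⟨2, by omega⟩, p ⟨3, by omega⟩, p ⟨4, by omega⟩, hinj.ne (by simp),
      hTG (hadj ⟨2, by omega⟩), hTG (hadj ⟨3, by omega⟩), h 0 (by omega), h 1 (by omega),
      h 2 (by omega)⟩
  obtain ⟨T', hT'G, hT', hlt⟩ := exists_isTree_ncard_degTwoVerts_lt hTG hT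
    (hadj ⟨i, by omega⟩) (hadj ⟨i + 1, by omega⟩) (hadj ⟨i + 2, by omega⟩) (hadj ⟨i + 3, by omega⟩)
    (hinj.ne (by simp [Fin.ext_iff, add_assoc])) (hinj.ne (by simp [Fin.ext_iff, add_assoc]))
    (hinj.ne (by simp [Fin.ext_iff, add_assoc])) (hdeg _) (hdeg _) (hdeg _)
    (hdeg _) (hdeg _) hGi
  exact hmin T' ⟨hT'G, hT'⟩ hlt

end CMCPaper
end

section
/- Let G = (V,E) be a connected finite simple undirected graph on n ≥ 2 vertices with edge weights w : E → {0,1}, such that every vertex of G is incident to at least one 1-edge and G contains no path on three vertices all of which have degree 2 in G. Then G has a spanning tree T whose leaf set L satisfies Σ_{v ∈ L} W_G(v) ≥ n/14. -/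
open Finset

namespace Finset

variable {α : Type*} {p : α → α} {D : Finset α}

lemma eq_of_iterate_eq (hinj : ∀ u₁ ∈ D, ∀ u₂ ∈ D, p u₁ ∈ D → p u₁ = p u₂ → u₁ = u₂)
    {u₁ u₂ : α} {t : ℕ} (h₁ : ∀ i ≤ t, p^[i] u₁ ∈ D) (h₂ : ∀ i ≤ t, p^[i] u₂ ∈ D)
    (h : p^[t] u₁ = p^[t] u₂) : u₁ = u₂ := by
  induction t with
  | zero => exact h
  | succ t ih =>
    refine ih (fun i hi ↦ h₁ i (by omega)) (fun i hi ↦ h₂ i (by omega)) ?_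
    rw [Function.iterate_succ_apply', Function.iterate_succ_apply'] at h
    exact hinj _ (h₁ t (by omega)) _ (h₂ t (by omega))
      (Function.iterate_succ_apply' p t u₁ ▸ h₁ (t + 1) le_rfl) h

lemma card_le_mul_card_filter_apply_notMem [DecidableEq α] (k : ℕ)
    (hinj : ∀ u₁ ∈ D, ∀ u₂ ∈ D, p u₁ ∈ D → p u₁ = p u₂ → u₁ = u₂)
    (hexit : ∀ v, ∃ i ≤ k, p^[i] v ∉ D) :
    #D ≤ k * #{v ∈ D | p v ∉ D} := by
  have hex (v : α) : ∃ i, p^[i] v ∉ D := (hexit v).imp fun _ h ↦ h.2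
  let m (v : α) : ℕ := Nat.find (hex v)
  have hm_le (v : α) : m v ≤ k := by
    obtain ⟨i, hik, hi⟩ := hexit v
    exact (Nat.find_min' (hex v) hi).trans hik
  have hm_pos {v : α} (hv : v ∈ D) : m v ≠ 0 := fun h ↦ by
    have := Nat.find_spec (hex v)
    rw [show Nat.find (hex v) = 0 from h] at this
    exact this hv
  have hm_mem (v : α) {i : ℕ} (hi : i < m v) : p^[i] v ∈ D := by
    simpa using Nat.find_min (hex v) hi
  -- `F v` is the last point of the orbit of `v` inside `D`, with the number of steps to it.
  let F (v : α) : α × ℕ := (p^[m v - 1] v, m v - 1)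
  have hmaps : ∀ v ∈ D, F v ∈ {v ∈ D | p v ∉ D} ×ˢ range k := by
    intro v hv
    have hpos := hm_pos hv
    simp only [F, mem_product, mem_filter, mem_range]
    refine ⟨⟨hm_mem v (by omega), ?_⟩, by have := hm_le v; omega⟩
    rw [← Function.iterate_succ_apply' p, Nat.succ_eq_add_one, Nat.sub_add_cancel (by omega)]
    exact Nat.find_spec (hex v)
  have hinjF : Set.InjOn F D := by
    intro v hv v' hv' hF
    simp only [F, Prod.mk.injEq] at hF
    obtain ⟨hF, ht⟩ := hF
    rw [← ht] at hF
    exact eq_of_iterate_eq hinj (fun i hi ↦ hm_mem v (by have := hm_pos hv; omega))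
      (fun i hi ↦ hm_mem v' (by have := hm_pos hv'; omega)) hF
  calc #D ≤ #({v ∈ D | p v ∉ D} ×ˢ range k) := card_le_card_of_injOn F hmaps hinjF
    _ = k * #{v ∈ D | p v ∉ D} := by rw [card_product, card_range, mul_comm]

lemma card_filter_apply_notMem_add_card_le [DecidableEq α] {s : Finset α} (hDs : D ⊆ s)
    (hsurj : ∀ v ∈ D, ∃ u ∈ s, p u = v) : #{v ∈ D | p v ∉ D} + #D ≤ #s := by
  have hD : #D ≤ #{u ∈ s | p u ∈ D} := card_le_card_of_surjOn p fun v hv ↦ by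
    obtain ⟨u, hu, rfl⟩ := hsurj v hv
    exact ⟨u, mem_filter.2 ⟨hu, hv⟩, rfl⟩
  have hdisj : Disjoint {v ∈ D | p v ∉ D} {u ∈ s | p u ∈ D} :=
    disjoint_left.2 fun _ hv hv' ↦ (mem_filter.1 hv).2 (mem_filter.1 hv').2
  calc #{v ∈ D | p v ∉ D} + #D ≤ #({v ∈ D | p v ∉ D} ∪ {u ∈ s | p u ∈ D}) := by
        rw [card_union_of_disjoint hdisj]; omega
    _ ≤ #s := card_le_card (union_subset ((filter_subset _ _).trans hDs) (filter_subset _ _))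

end Finset

namespace SimpleGraph

variable {V : Type*} {G T : SimpleGraph V} {a b c r s t u v x y : V} {p : V → V}

def leafSet (G : SimpleGraph V) : Set V := {v | (G.neighborSet v).ncard = 1}

def NoSevenDegTwoWalk (T : SimpleGraph V) : Prop :=
  ∀ c : ℕ → V, (∀ i < 6, T.Adj (c i) (c (i + 1))) → (∀ i < 5, c (i + 2) ≠ c i) →
    ∃ i ≤ 6, (T.neighborSet (c i)).ncard ≠ 2

lemma ncard_neighborSet_eq_degree_s10 [Fintype (T.neighborSet v)] :
    (T.neighborSet v).ncard = T.degree v := by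
  rw [Set.ncard_eq_toFinset_card', ← card_neighborFinset_eq_degree, neighborFinset]

lemma eq_or_eq_of_ncard_neighborSet_eq_two (h : (G.neighborSet v).ncard = 2) (ha : G.Adj v a)
    (hb : G.Adj v b) (hab : a ≠ b) (hc : G.Adj v c) : c = a ∨ c = b := by
  have hfin : (G.neighborSet v).Finite := Set.finite_of_ncard_ne_zero (by omega)
  have : G.neighborSet v = {a, b} :=
    (Set.eq_of_subset_of_ncard_le (by simp [Set.insert_subset_iff, ha, hb])
      (by rw [h, Set.ncard_pair hab]) hfin).symm
  have hc' : c ∈ G.neighborSet v := hc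
  simpa [this] using hc'

lemma neighborSet_sup_edge_of_ne (hs : v ≠ s) (ht : v ≠ t) :
    (G ⊔ edge s t).neighborSet v = G.neighborSet v := by
  ext u
  simp [edge_adj, hs, ht]

lemma neighborSet_deleteEdges_of_ne (ha : v ≠ a) (hb : v ≠ b) :
    (G.deleteEdges {s(a, b)}).neighborSet v = G.neighborSet v := by
  ext u
  simp [ha, hb]

lemma neighborSet_deleteEdges_left :
    (G.deleteEdges {s(a, b)}).neighborSet a = G.neighborSet a \ {b} := by
  ext u
  simp only [mem_neighborSet, deleteEdges_adj, Set.mem_singleton_iff, Set.mem_sdiff, Sym2.eq_iff]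
  grind [G.ne_of_adj]

lemma Preconnected.reachable_deleteEdges_or (hG : G.Preconnected) (a b v : V) :
    (G.deleteEdges {s(a, b)}).Reachable v a ∨ (G.deleteEdges {s(a, b)}).Reachable v b := by
  suffices ∀ {u c : V} (p : G.Walk u c), c = a →
      (G.deleteEdges {s(a, b)}).Reachable u a ∨ (G.deleteEdges {s(a, b)}).Reachable u b from
    this (hG v a).some rfl
  intro u c p
  induction p with
  | nil => rintro rfl; exact Or.inl .rfl
  | @cons u w _ h p ih =>
    intro hc
    by_cases he : s(u, w) = s(a, b)
    · rcases Sym2.eq_iff.mp he with ⟨rfl, -⟩ | ⟨rfl, -⟩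
      exacts [Or.inl .rfl, Or.inr .rfl]
    · have hadj : (G.deleteEdges {s(a, b)}).Adj u w := by simp [h, he]
      exact (ih hc).imp hadj.reachable.trans hadj.reachable.trans

lemma IsTree.sup_edge_deleteEdges_s10 (hT : T.IsTree) (h : ¬(T.deleteEdges {s(a, b)}).Reachable y x) :
    (T.deleteEdges {s(a, b)} ⊔ edge y x).IsTree := by
  set T₀ := T.deleteEdges {s(a, b)}
  -- Every vertex reaches `a` or `b` in `T₀`, and `y`, `x` reach different ones of them.
  have hyx : (T₀ ⊔ edge y x).Adj y x := Or.inr (by simp [edge_adj]; rintro rfl; exact h .rfl)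
  have hreach : ∀ v, (T₀ ⊔ edge y x).Reachable v y := by
    have hlift {u v : V} (h : T₀.Reachable u v) : (T₀ ⊔ edge y x).Reachable u v :=
      h.mono le_sup_left
    have hend : ∀ c, T₀.Reachable y c ∨ T₀.Reachable x c → (T₀ ⊔ edge y x).Reachable c y := by
      rintro c (hc | hc)
      · exact (hlift hc).symm
      · exact (hlift hc).symm.trans hyx.reachable.symm
    have hsides : ∀ c, c = a ∨ c = b → T₀.Reachable y c ∨ T₀.Reachable x c := by
      have hy := hT.connected.preconnected.reachable_deleteEdges_or a b y
      have hx := hT.connected.preconnected.reachable_deleteEdges_or a b x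
      have hsep : ∀ c, ¬(T₀.Reachable y c ∧ T₀.Reachable x c) :=
        fun c hc ↦ h (hc.1.trans hc.2.symm)
      rintro c (rfl | rfl) <;> grind
    intro v
    rcases hT.connected.preconnected.reachable_deleteEdges_or a b v with hv | hv
    · exact (hlift hv).trans (hend a (hsides a (Or.inl rfl)))
    · exact (hlift hv).trans (hend b (hsides b (Or.inr rfl)))
  have : Nonempty V := ⟨y⟩
  exact ⟨⟨fun u v ↦ (hreach u).trans (hreach v).symm⟩,
    (hT.isAcyclic.anti (deleteEdges_le _)).sup_edge_of_not_reachable h⟩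

lemma IsAcyclic.not_reachable_deleteEdges_of_mem_edges (hT : T.IsAcyclic) {p : T.Walk u v}
    (hp : p.IsPath) {e : Sym2 V} (he : e ∈ p.edges) : ¬(T.deleteEdges {e}).Reachable u v := by
  classical
  rintro ⟨q⟩
  let q' := q.mapLe (deleteEdges_le _)
  have hq' : e ∉ q'.bypass.edges := fun h ↦ by
    have := q.edges_subset_edgeSet (Walk.edges_mapLe_eq_edges _ q ▸ q'.edges_bypass_subset_edges h)
    simp at this
  have : q'.bypass = p := congrArg Subtype.val
    ((hT.subsingleton_path u v).elim ⟨_, q'.bypass_isPath⟩ ⟨p, hp⟩)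
  exact hq' (this ▸ he)

lemma IsTree.not_reachable_deleteEdges_or {a' b' : V} (hT : T.IsTree)
    (hy : (T.neighborSet y).ncard = 2) (hya : T.Adj y a) (hyb : T.Adj y b) (hab : a ≠ b)
    (ha : (T.neighborSet a).ncard = 2) (haa' : T.Adj a a') (hya' : y ≠ a')
    (hb : (T.neighborSet b).ncard = 2) (hbb' : T.Adj b b') (hyb' : y ≠ b')
    (hxy : x ≠ y) (hxa : x ≠ a) (hxb : x ≠ b) :
    ¬(T.deleteEdges {s(a, a')}).Reachable y x ∨ ¬(T.deleteEdges {s(b, b')}).Reachable y x := by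
  -- The tree path from `y` to `x` starts with `y, a, a'` or `y, b, b'`, as `a`, `b` have degree 2.
  obtain ⟨p, hp⟩ := (hT.connected y x).exists_isPath
  suffices s(a, a') ∈ p.edges ∨ s(b, b') ∈ p.edges from
    this.imp (hT.isAcyclic.not_reachable_deleteEdges_of_mem_edges hp)
      (hT.isAcyclic.not_reachable_deleteEdges_of_mem_edges hp)
  cases p with
  | nil => exact absurd rfl hxy
  | @cons _ z _ hz q =>
    cases q with
    | nil =>
      rcases eq_or_eq_of_ncard_neighborSet_eq_two hy hya hyb hab hz with rfl | rfl <;> contradiction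
    | @cons _ z' _ hz' q =>
      have hz'y : z' ≠ y := by
        rintro rfl
        simp_all [Walk.cons_isPath_iff]
      have hnext : ∀ {c c'}, (T.neighborSet c).ncard = 2 → T.Adj y c → T.Adj c c' → y ≠ c' →
          z = c → z' = c' := by
        rintro c c' hc hyc hcc' hyc' rfl
        exact (eq_or_eq_of_ncard_neighborSet_eq_two hc hyc.symm hcc' hyc' hz').resolve_left hz'y
      rcases eq_or_eq_of_ncard_neighborSet_eq_two hy hya hyb hab hz with rfl | rfl
      · simp [hnext ha hya haa' hya' rfl]
      · simp [hnext hb hyb hbb' hyb' rfl]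

lemma ncard_leafSet_lt_sup_edge_deleteEdges [Finite V] {a' : V} (hy : (T.neighborSet y).ncard = 2)
    (hya : y ≠ a) (hya' : y ≠ a') (haa' : T.Adj a a') (ha : (T.neighborSet a).ncard = 2)
    (ha' : (T.neighborSet a').ncard = 2) :
    T.leafSet.ncard < (T.deleteEdges {s(a, a')} ⊔ edge y x).leafSet.ncard := by
  set T' := T.deleteEdges {s(a, a')} ⊔ edge y x
  have hsub : insert a (insert a' T.leafSet) ⊆ insert x T'.leafSet := by
    intro v hv
    by_cases hvx : v = x
    · exact Or.inl hvx
    have hvy : v ≠ y := by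
      rintro rfl
      rcases hv with rfl | rfl | hv
      exacts [hya rfl, hya' rfl, by have : (T.neighborSet v).ncard = 1 := hv; omega]
    refine Or.inr ?_
    simp only [leafSet, Set.mem_ofPred_eq, T', neighborSet_sup_edge_of_ne hvy hvx]
    rcases hv with rfl | rfl | hv
    · rw [neighborSet_deleteEdges_left,
        Set.ncard_sdiff_singleton_of_mem (s := T.neighborSet _) haa']
      omega
    · rw [Sym2.eq_swap, neighborSet_deleteEdges_left,
        Set.ncard_sdiff_singleton_of_mem (s := T.neighborSet _) haa'.symm]
      omega
    · have hv : (T.neighborSet v).ncard = 1 := hv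
      rw [neighborSet_deleteEdges_of_ne (by rintro rfl; omega) (by rintro rfl; omega)]
      exact hv
  have haL : a ∉ insert a' T.leafSet := by
    rintro (h | h)
    exacts [T.ne_of_adj haa' h, by have : (T.neighborSet a).ncard = 1 := h; omega]
  have ha'L : a' ∉ T.leafSet := fun h ↦ by have : (T.neighborSet a').ncard = 1 := h; omega
  have hcard := (Set.ncard_le_ncard hsub).trans (Set.ncard_insert_le x T'.leafSet)
  rw [Set.ncard_insert_of_notMem haL, Set.ncard_insert_of_notMem ha'L] at hcard
  omega

lemma IsTree.exists_isTree_ncard_leafSet_lt [Finite V] {a' b' : V} (hT : T.IsTree) (hTG : T ≤ G)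
    (hb' : (T.neighborSet b').ncard = 2) (hb : (T.neighborSet b).ncard = 2)
    (hy : (T.neighborSet y).ncard = 2) (ha : (T.neighborSet a).ncard = 2)
    (ha' : (T.neighborSet a').ncard = 2)
    (hbb' : T.Adj b b') (hyb : T.Adj y b) (hya : T.Adj y a) (haa' : T.Adj a a')
    (hyb' : y ≠ b') (hab : a ≠ b) (hya' : y ≠ a') (hyG : (G.neighborSet y).ncard ≠ 2) :
    ∃ T' ≤ G, T'.IsTree ∧ T.leafSet.ncard < T'.leafSet.ncard := by
  obtain ⟨x, hyx, hx⟩ : ∃ x ∈ G.neighborSet y, x ∉ ({a, b} : Set V) := by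
    refine Set.exists_mem_notMem_of_ncard_lt_ncard ?_
    have : (T.neighborSet y).ncard ≤ (G.neighborSet y).ncard :=
      Set.ncard_le_ncard fun _ h ↦ hTG h
    rw [Set.ncard_pair hab]
    omega
  simp only [Set.mem_insert_iff, Set.mem_singleton_iff, not_or] at hx
  have hle {c c' : V} : T.deleteEdges {s(c, c')} ⊔ edge y x ≤ G :=
    sup_le ((deleteEdges_le _).trans hTG) ((edge_le_iff G).2 (Or.inr hyx))
  rcases hT.not_reachable_deleteEdges_or hy hya hyb hab ha haa' hya' hb hbb' hyb'
    (G.ne_of_adj hyx).symm hx.1 hx.2 with h | h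
  · exact ⟨_, hle, hT.sup_edge_deleteEdges_s10 h,
      ncard_leafSet_lt_sup_edge_deleteEdges hy (T.ne_of_adj hya) hya' haa' ha ha'⟩
  · exact ⟨_, hle, hT.sup_edge_deleteEdges_s10 h,
      ncard_leafSet_lt_sup_edge_deleteEdges hy (T.ne_of_adj hyb) hyb' hbb' hb hb'⟩

lemma IsTree.card_add_two_le [Fintype V] [Nontrivial V] (hT : T.IsTree) :
    Fintype.card V + 2 ≤
      2 * #{v | (T.neighborSet v).ncard = 1} + #{v | (T.neighborSet v).ncard = 2} := by
  classical
  simp_rw [ncard_neighborSet_eq_degree_s10]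
  have hpos (v : V) : 0 < T.degree v :=
    hT.connected.preconnected.minDegree_pos_of_nontrivial.trans_le (T.minDegree_le_degree v)
  have hsum := T.sum_degrees_eq_twice_card_edges
  have hedges := hT.card_edgeFinset
  have hv (v : V) : 3 ≤ T.degree v + 2 * (if T.degree v = 1 then 1 else 0) +
      (if T.degree v = 2 then 1 else 0) := by
    have := hpos v
    split_ifs <;> omega
  have := Finset.sum_le_sum fun v (_ : v ∈ univ) ↦ hv v
  simp only [sum_add_distrib, ← mul_sum, sum_boole, sum_const, card_univ, smul_eq_mul,
    Nat.cast_id] at this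
  omega

def IsParentMap (T : SimpleGraph V) (r : V) (p : V → V) : Prop :=
  ∀ v, v ≠ r → T.Adj v (p v) ∧ T.dist r (p v) + 1 = T.dist r v

lemma Connected.exists_adj_dist_add_one (hT : T.Connected) (hv : v ≠ r) :
    ∃ u, T.Adj v u ∧ T.dist r u + 1 = T.dist r v := by
  obtain ⟨q, hq⟩ := hT.exists_walk_length_eq_dist v r
  cases q with
  | nil => exact absurd rfl hv
  | @cons _ u _ h q =>
    refine ⟨u, h, ?_⟩
    obtain ⟨q', hq'⟩ := hT.exists_walk_length_eq_dist u r
    have h₁ := dist_le q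
    have h₂ := dist_le (Walk.cons h q')
    simp only [Walk.length_cons] at hq h₂
    rw [dist_comm (u := r), dist_comm (u := r)]
    omega

lemma Connected.exists_isParentMap (hT : T.Connected) (r : V) : ∃ p, T.IsParentMap r p := by
  classical
  choose! p hp using fun v (hv : v ≠ r) ↦ hT.exists_adj_dist_add_one hv
  exact ⟨p, hp⟩

lemma IsTree.eq_of_adj_of_dist_add_one {u₁ u₂ : V} (hT : T.IsTree) (h₁ : T.Adj v u₁)
    (h₂ : T.Adj v u₂) (hd₁ : T.dist r u₁ + 1 = T.dist r v) (hd₂ : T.dist r u₂ + 1 = T.dist r v) :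
    u₁ = u₂ := by
  obtain ⟨q₁, hq₁⟩ := hT.connected.exists_walk_length_eq_dist r u₁
  obtain ⟨q₂, hq₂⟩ := hT.connected.exists_walk_length_eq_dist r u₂
  have hpath {u : V} (q : T.Walk r u) (hq : q.length = T.dist r u) (h : T.Adj u v)
      (hd : T.dist r u + 1 = T.dist r v) : (q.concat h).IsPath :=
    Walk.isPath_of_length_eq_dist _ (by rw [Walk.length_concat, hq, hd])
  have := congrArg Subtype.val ((hT.isAcyclic.subsingleton_path r v).elim
    ⟨_, hpath q₁ hq₁ h₁.symm hd₁⟩ ⟨_, hpath q₂ hq₂ h₂.symm hd₂⟩)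
  exact (Walk.concat_inj this).1

lemma IsParentMap.eq_of_adj (hT : T.IsTree) (hp : T.IsParentMap r p) (h : T.Adj v u)
    (hd : T.dist r u + 1 = T.dist r v) : u = p v := by
  have hv : v ≠ r := by rintro rfl; simp at hd
  exact hT.eq_of_adj_of_dist_add_one h (hp v hv).1 hd (hp v hv).2

lemma IsParentMap.parent_eq_of_adj_of_ne (hT : T.IsTree) (hp : T.IsParentMap r p)
    (h : T.Adj v u) (hu : u ≠ p v) : u ≠ r ∧ p u = v := by
  rcases hT.dist_eq_dist_add_one_of_adj r h with hd | hd
  · exact absurd (hp.eq_of_adj hT h hd.symm) hu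
  · refine ⟨by rintro rfl; simp at hd, (hp.eq_of_adj hT h.symm hd.symm).symm⟩

lemma IsParentMap.eq_of_parent_eq (hp : T.IsParentMap r p) {u₁ u₂ : V}
    (hu₁ : u₁ ≠ r) (hu₂ : u₂ ≠ r) (hv : p u₁ ≠ r) (hdeg : (T.neighborSet (p u₁)).ncard = 2)
    (h : p u₁ = p u₂) : u₁ = u₂ := by
  obtain ⟨hadj₁, hd₁⟩ := hp u₁ hu₁
  obtain ⟨hadj₂, hd₂⟩ := hp u₂ hu₂
  obtain ⟨hadj, hd⟩ := hp (p u₁) hv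
  rw [← h] at hadj₂ hd₂
  rcases eq_or_eq_of_ncard_neighborSet_eq_two hdeg hadj hadj₁.symm
    (fun h' ↦ by have := congrArg (T.dist r) h'; omega) hadj₂.symm with h' | h'
  · have := congrArg (T.dist r) h'
    omega
  · exact h'.symm

lemma IsParentMap.exists_parent_eq (hT : T.IsTree) (hp : T.IsParentMap r p)
    (hv : 1 < (T.neighborSet v).ncard) : ∃ u ≠ r, p u = v := by
  obtain ⟨u, hu, hup⟩ := Set.exists_ne_of_one_lt_ncard hv (p v)
  obtain ⟨hur, hpu⟩ := hp.parent_eq_of_adj_of_ne hT hu hup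
  exact ⟨u, hur, hpu⟩

lemma IsParentMap.exists_iterate_eq_or_ncard_ne (hp : T.IsParentMap r p)
    (hwalk : T.NoSevenDegTwoWalk) (v : V) :
    ∃ i ≤ 6, p^[i] v = r ∨ (T.neighborSet (p^[i] v)).ncard ≠ 2 := by
  by_contra! hchain
  have hpar (i : ℕ) (hi : i ≤ 6) :
      T.Adj (p^[i] v) (p^[i + 1] v) ∧ T.dist r (p^[i + 1] v) + 1 = T.dist r (p^[i] v) :=
    Function.iterate_succ_apply' p i v ▸ hp _ (hchain i hi).1
  obtain ⟨i, hi, hdeg⟩ := hwalk (fun i ↦ p^[i] v) (fun i hi ↦ (hpar i (by omega)).1)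
    (fun i hi h ↦ by
      have := congrArg (T.dist r) h
      have := (hpar i (by omega)).2
      have : T.dist r (p^[i + 2] v) + 1 = T.dist r (p^[i + 1] v) := (hpar (i + 1) (by omega)).2
      omega)
  exact hdeg (hchain i hi).2

lemma IsParentMap.seven_mul_card_le [Fintype V] [DecidableEq V] (hT : T.IsTree)
    (hp : T.IsParentMap r p) (hwalk : T.NoSevenDegTwoWalk) :
    7 * #{v | v ≠ r ∧ (T.neighborSet v).ncard = 2} ≤ 6 * (Fintype.card V - 1) := by
  set D : Finset V := {v | v ≠ r ∧ (T.neighborSet v).ncard = 2}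
  have hD {v : V} : v ∈ D ↔ v ≠ r ∧ (T.neighborSet v).ncard = 2 := by simp [D]
  have h₁ := card_le_mul_card_filter_apply_notMem (p := p) 6
    (fun u₁ hu₁ u₂ hu₂ hv ↦ hp.eq_of_parent_eq (hD.1 hu₁).1 (hD.1 hu₂).1 (hD.1 hv).1 (hD.1 hv).2)
    (fun v ↦ (hp.exists_iterate_eq_or_ncard_ne hwalk v).imp fun _ ⟨hi, h⟩ ↦ ⟨hi, by rw [hD]; tauto⟩)
  have h₂ := card_filter_apply_notMem_add_card_le (p := p)
    (fun v hv ↦ mem_erase.2 ⟨(hD.1 hv).1, mem_univ v⟩) fun v hv ↦ by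
      obtain ⟨u, hur, hpu⟩ := hp.exists_parent_eq hT ((hD.1 hv).2 ▸ one_lt_two)
      exact ⟨u, mem_erase.2 ⟨hur, mem_univ u⟩, hpu⟩
  rw [card_erase_of_mem (mem_univ r), card_univ] at h₂
  omega

lemma IsTree.card_add_thirteen_le [Fintype V] [Nontrivial V] (hT : T.IsTree)
    (hwalk : T.NoSevenDegTwoWalk) :
    Fintype.card V + 13 ≤ 14 * T.leafSet.ncard := by
  classical
  obtain ⟨r⟩ := hT.connected.nonempty
  obtain ⟨p, hp⟩ := hT.connected.exists_isParentMap r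
  have h₁ := hT.card_add_two_le
  have h₂ := hp.seven_mul_card_le hT hwalk
  have h₃ : #{v | (T.neighborSet v).ncard = 2} ≤ #{v | v ≠ r ∧ (T.neighborSet v).ncard = 2} + 1 :=
    (card_le_card fun v hv ↦ by by_cases hvr : v = r <;> simp_all).trans (card_insert_le r _)
  rw [leafSet, Set.ncard_eq_toFinset_card', Set.toFinset_ofPred]
  omega

end SimpleGraph

namespace CMCPaper

open SimpleGraph

variable {V : Type*} {G T : SimpleGraph V}

theorem noSevenDegTwoWalk_of_forall_ncard_leafSet_le [Finite V] (hG : NoDeg2Path3 G)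
    (hT : T.IsTree) (hTG : T ≤ G)
    (hmax : ∀ T' ≤ G, T'.IsTree → T'.leafSet.ncard ≤ T.leafSet.ncard) : T.NoSevenDegTwoWalk := by
  intro c hadj hne
  by_contra! hdeg
  obtain ⟨k, hk, hkG⟩ : ∃ k ≤ 2, (G.neighborSet (c (k + 2))).ncard ≠ 2 := by
    by_contra! h
    exact hG ⟨c 2, c 3, c 4, (hne 2 (by omega)).symm, hTG (hadj 2 (by omega)),
      hTG (hadj 3 (by omega)), h 0 (by omega), h 1 (by omega), h 2 (by omega)⟩
  obtain ⟨T', hT'G, hT', hlt⟩ := hT.exists_isTree_ncard_leafSet_lt hTG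
    (hdeg k (by omega)) (hdeg (k + 1) (by omega)) (hdeg (k + 2) (by omega))
    (hdeg (k + 3) (by omega)) (hdeg (k + 4) (by omega))
    (hadj k (by omega)).symm (hadj (k + 1) (by omega)).symm (hadj (k + 2) (by omega))
    (hadj (k + 3) (by omega)) (hne k (by omega)) (hne (k + 1) (by omega))
    (hne (k + 2) (by omega)).symm hkG
  exact (hmax T' hT'G hT').not_gt hlt

lemma one_le_vertexWeight [Finite V] {w : Sym2 V → ℕ} {v : V}
    (hv : ∃ e ∈ G.edgeSet, v ∈ e ∧ w e = 1) : 1 ≤ vertexWeight G w v := by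
  obtain ⟨e, he, hve, hwe⟩ := hv
  rw [vertexWeight, finsum_mem_eq_finite_toFinset_sum _ (Set.toFinite _)]
  exact hwe ▸ Finset.single_le_sum (fun _ _ ↦ Nat.zero_le _) (by simp [he, hve])

lemma ncard_le_finsum_vertexWeight [Finite V] {w : Sym2 V → ℕ}
    (hinc : ∀ v : V, ∃ e ∈ G.edgeSet, v ∈ e ∧ w e = 1) (s : Set V) :
    s.ncard ≤ ∑ᶠ v ∈ s, vertexWeight G w v := by
  rw [finsum_mem_eq_finite_toFinset_sum _ (Set.toFinite s),
    Set.ncard_eq_toFinset_card _ (Set.toFinite s)]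
  simpa using Finset.card_nsmul_le_sum _ _ 1 fun v _ ↦ one_le_vertexWeight (hinc v)

theorem spanning_tree_thick_leaves_general {V : Type*} [Fintype V]
    (G : SimpleGraph V) (hconn : G.Connected)
    (hn : 2 ≤ Fintype.card V)
    (w : Sym2 V → ℕ)
    (hinc : ∀ v : V, ∃ e ∈ G.edgeSet, v ∈ e ∧ w e = 1)
    (hG : NoDeg2Path3 G) :
    ∃ T : SimpleGraph V, T ≤ G ∧ T.IsTree ∧
      (Fintype.card V : ℝ) / 14 ≤
        ↑(∑ᶠ v ∈ {v : V | (T.neighborSet v).ncard = 1}, vertexWeight G w v) := by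
  have : Nontrivial V := Fintype.one_lt_card_iff_nontrivial.mp hn
  obtain ⟨T, ⟨hTG, hT⟩, hmax⟩ := Set.exists_max_image {T | T ≤ G ∧ T.IsTree}
    (fun T ↦ T.leafSet.ncard) (Set.toFinite _) hconn.exists_isTree_le
  refine ⟨T, hTG, hT, ?_⟩
  have hcount := hT.card_add_thirteen_le <|
    noSevenDegTwoWalk_of_forall_ncard_leafSet_le hG hT hTG fun T' hT'G hT' ↦ hmax T' ⟨hT'G, hT'⟩
  have hweight : T.leafSet.ncard ≤
      ∑ᶠ v ∈ {v : V | (T.neighborSet v).ncard = 1}, vertexWeight G w v :=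
    ncard_le_finsum_vertexWeight hinc _
  rw [div_le_iff₀ (by norm_num)]
  exact_mod_cast (by omega : Fintype.card V ≤ _ * 14)

/-- A connected graph on `n ≥ 2` vertices with 0/1 weights in which every
vertex is incident to a 1-edge and which has no path on three vertices all of degree 2
has a spanning tree whose leaf set `L` satisfies `Σ_{v ∈ L} W_G(v) ≥ n/14`. -/
theorem spanning_tree_thick_leaves {V : Type*} [Fintype V]
    (G : SimpleGraph V) (hconn : G.Connected)
    (hn : 2 ≤ Fintype.card V)
    (w : Sym2 V → ℕ) (hw : ∀ e ∈ G.edgeSet, w e ≤ 1)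
    (hinc : ∀ v : V, ∃ e ∈ G.edgeSet, v ∈ e ∧ w e = 1)
    (hG : NoDeg2Path3 G) :
    ∃ T : SimpleGraph V, T ≤ G ∧ T.IsTree ∧
      (Fintype.card V : ℝ) / 14 ≤
        ↑(∑ᶠ v ∈ {v : V | (T.neighborSet v).ncard = 1}, vertexWeight G w v) :=
  spanning_tree_thick_leaves_general G hconn hn w hinc hG

end CMCPaper
end

section
/- Let G = (V,E) be a connected finite simple undirected graph and let S ⊆ V be a nonempty set with G[S] connected and S ∪ N(S) ≠ V. Then there exists a vertex u ∈ N(S) \ S such that G[S ∪ {u}] is connected and |N(S ∪ {u}) \ (S ∪ {u})| ≥ |N(S) \ S|. -/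
namespace CMCPaper

variable {V : Type*}

def outerBoundary (G : SimpleGraph V) (S : Set V) : Set V :=
  {v | ∃ u ∈ S, G.Adj u v} \ S

lemma union_outerBoundary (G : SimpleGraph V) (S : Set V) :
    S ∪ outerBoundary G S = S ∪ {v | ∃ u ∈ S, G.Adj u v} :=
  Set.union_sdiff_self

/-- A walk from `S` to a vertex outside `S ∪ N(S)` leaves `S ∪ N(S)` along an edge `uz`;
`u` cannot lie in `S`, since `z ∉ N(S)`. -/
lemma exists_adj_of_union_outerBoundary_ne_univ {G : SimpleGraph V} (hconn : G.Connected)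
    {S : Set V} (hS : S.Nonempty) (hne : S ∪ outerBoundary G S ≠ Set.univ) :
    ∃ u ∈ outerBoundary G S, ∃ z ∉ S ∪ outerBoundary G S, G.Adj u z := by
  obtain ⟨y, hy⟩ := (Set.ne_univ_iff_exists_notMem _).mp hne
  obtain ⟨s, hs⟩ := hS
  obtain ⟨d, -, hdT, hdnT⟩ := (hconn s y).some.exists_boundary_dart _ (Or.inl hs) hy
  have hfst : d.fst ∉ S := fun h ↦ hdnT <| by
    by_cases hsnd : d.snd ∈ S
    · exact Or.inl hsnd
    · exact Or.inr ⟨⟨d.fst, h, d.adj⟩, hsnd⟩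
  exact ⟨d.fst, hdT.resolve_left hfst, d.snd, hdnT, d.adj⟩

/-- Adding `u` to `S` loses `u` from the outer boundary but gains its neighbour `z`. -/
lemma ncard_outerBoundary_le_union_singleton [Finite V] {G : SimpleGraph V} {S : Set V}
    {u z : V} (hu : u ∈ outerBoundary G S) (hz : z ∉ S ∪ outerBoundary G S)
    (huz : G.Adj u z) :
    (outerBoundary G S).ncard ≤ (outerBoundary G (S ∪ {u})).ncard := by
  have hzS : z ∉ S := fun h ↦ hz (Or.inl h)
  have hzB : z ∉ outerBoundary G S := fun h ↦ hz (Or.inr h)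
  have hsub : insert z (outerBoundary G S \ {u}) ⊆ outerBoundary G (S ∪ {u}) := by
    rintro v (rfl | ⟨⟨⟨w, hwS, hwv⟩, hvS⟩, hvu⟩)
    · exact ⟨⟨u, Or.inr rfl, huz⟩, by rintro (h | rfl) <;> [exact hzS h; exact huz.ne rfl]⟩
    · exact ⟨⟨w, Or.inl hwS, hwv⟩, by rintro (h | h) <;> [exact hvS h; exact hvu h]⟩
  calc (outerBoundary G S).ncard
      = (outerBoundary G S \ {u}).ncard + 1 := (Set.ncard_sdiff_singleton_add_one hu).symm
    _ = (insert z (outerBoundary G S \ {u})).ncard :=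
        (Set.ncard_insert_of_notMem (fun h ↦ hzB h.1)).symm
    _ ≤ (outerBoundary G (S ∪ {u})).ncard := Set.ncard_le_ncard hsub

/-- If `G[S]` is connected and `S ∪ N(S) ≠ V`, then some
`u ∈ N(S) \ S` can be added to `S` keeping it connected without decreasing
`|N(S) \ S|`. -/
theorem extend_connected_set {V : Type*} [Fintype V]
    (G : SimpleGraph V) (hconn : G.Connected)
    (S : Set V) (hS : S.Nonempty) (hSc : (G.induce S).Connected)
    (hne : S ∪ {v : V | ∃ u ∈ S, G.Adj u v} ≠ Set.univ) :
    ∃ u₀ ∈ ({v : V | ∃ u ∈ S, G.Adj u v}) \ S,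
      (G.induce (S ∪ {u₀})).Connected ∧
      (({v : V | ∃ u ∈ S, G.Adj u v}) \ S).ncard ≤
        (({v : V | ∃ u ∈ S ∪ {u₀}, G.Adj u v}) \ (S ∪ {u₀})).ncard := by
  rw [← union_outerBoundary] at hne
  obtain ⟨u, hu, z, hz, huz⟩ := exists_adj_of_union_outerBoundary_ne_univ hconn hS hne
  obtain ⟨w, hwS, hwu⟩ := hu.1
  refine ⟨u, hu, ?_, ncard_outerBoundary_le_union_singleton hu hz huz⟩
  exact SimpleGraph.connected_induce_union hSc.preconnected (by simp) hwS rfl hwu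

end CMCPaper
end

section
/- Let G = (V_G, E_G) and H = (V_H, E_H) be finite simple undirected graphs and let f : V_G → V_H be a surjection such that (i) for every a ∈ V_H, the fiber f⁻¹(a) induces a connected subgraph of G, and (ii) two distinct vertices a, b ∈ V_H are adjacent in H if and only if some edge of G joins a vertex of f⁻¹(a) to a vertex of f⁻¹(b). Call an edge of G contracted if both of its endpoints lie in the same fiber. Let S ⊆ V_G be nonempty with G[S] connected, and let S' = f(S) = {a ∈ V_H : f⁻¹(a) ∩ S ≠ ∅}. Then H[S'] is connected, and |δ_H(S')| is at least the number of edges e ∈ δ_G(S) such that neither endpoint of e is incident to a contracted edge. -/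
/-!
An edge of `G` either lies inside a fiber or maps to an edge of `H`, so walks in `G[S]` project
to walks in `H[f(S)]`. A vertex with no neighbour in its own fiber is, the fiber being connected,
alone in it; hence `f` maps the cut edges of `S` whose endpoints meet no contracted edge
injectively to cut edges of `f(S)`.
-/

namespace CMCPaper

variable {V : Type*}

theorem _root_.SimpleGraph.Preconnected.eq_of_mem_of_forall_not_adj {G : SimpleGraph V} {s : Set V}
    (hs : (G.induce s).Preconnected) {u w : V} (hu : u ∈ s) (hw : w ∈ s)
    (hnadj : ∀ x ∈ s, ¬ G.Adj u x) : w = u := by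
  by_contra hne
  obtain ⟨p⟩ := hs ⟨u, hu⟩ ⟨w, hw⟩
  have hnil : ¬ p.Nil := p.not_nil_of_ne fun h ↦ hne (congrArg Subtype.val h).symm
  exact hnadj _ (p.getVert 1).2 (p.adj_snd hnil)

theorem _root_.SimpleGraph.Preconnected.of_surjective_of_adj_imp {W : Type*} {G : SimpleGraph V}
    {H : SimpleGraph W} (hG : G.Preconnected) {g : V → W} (hg : Function.Surjective g)
    (hadj : ∀ u v, G.Adj u v → g u ≠ g v → H.Adj (g u) (g v)) : H.Preconnected := by
  intro a b
  obtain ⟨u, rfl⟩ := hg a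
  obtain ⟨v, rfl⟩ := hg b
  rw [SimpleGraph.reachable_iff_reflTransGen]
  refine ((SimpleGraph.reachable_iff_reflTransGen u v).1 (hG u v)).lift' g fun x y hxy ↦
    show Relation.ReflTransGen H.Adj (g x) (g y) from ?_
  by_cases hxy' : g x = g y
  · rw [hxy']
  · exact .single (hadj x y hxy hxy')

theorem _root_.SimpleGraph.Connected.induce_image {W : Type*} {G : SimpleGraph V}
    {H : SimpleGraph W} {f : V → W} (hadj : ∀ u v, G.Adj u v → f u ≠ f v → H.Adj (f u) (f v))
    {S : Set V}
    (hS : (G.induce S).Connected) : (H.induce (f '' S)).Connected := by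
  have : Nonempty S := hS.nonempty
  refine ⟨hS.preconnected.of_surjective_of_adj_imp Set.imageFactorization_surjective ?_⟩
  intro u v huv hne
  exact hadj u v huv fun h ↦ hne (Subtype.ext h)

theorem _root_.Sym2.injOn_map {α β : Type*} (f : α → β) :
    Set.InjOn (Sym2.map f) {e | ∀ u ∈ e, ∀ w, f w = f u → w = u} := by
  intro e₁ h₁ e₂ _ heq
  induction e₁ using Sym2.ind with | h u₁ v₁ => ?_
  induction e₂ using Sym2.ind with | h u₂ v₂ => ?_
  simp only [Set.mem_ofPred_eq, Sym2.mem_iff, forall_eq_or_imp, forall_eq] at h₁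
  simp only [Sym2.map_mk, Sym2.eq_iff] at heq
  rcases heq with ⟨hu, hv⟩ | ⟨hu, hv⟩
  · rw [h₁.1 u₂ hu.symm, h₁.2 v₂ hv.symm]
  · rw [h₁.1 v₂ hu.symm, h₁.2 u₂ hv.symm, Sym2.eq_swap]

theorem mk_mem_cutSet_image {VG VH : Type*} {H : SimpleGraph VH} {f : VG → VH} {S : Set VG}
    {u v : VG} (huv : H.Adj (f u) (f v)) (hu : u ∈ S) (hv : v ∉ S)
    (hfiber : ∀ w, f w = f v → w = v) : s(f u, f v) ∈ cutSet H (f '' S) := by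
  refine ⟨huv, f u, f v, rfl, Set.mem_image_of_mem f hu, ?_⟩
  rintro ⟨w, hw, hwv⟩
  exact hv (hfiber w hwv ▸ hw)

theorem contraction_project_general {VG VH : Type*} [Fintype VH]
    (G : SimpleGraph VG) (H : SimpleGraph VH) (f : VG → VH)
    (hfiber : ∀ a : VH, (G.induce (f ⁻¹' {a})).Connected)
    (hadj : ∀ a b : VH, a ≠ b →
      (H.Adj a b ↔ ∃ u v : VG, f u = a ∧ f v = b ∧ G.Adj u v))
    (S : Set VG) (hSconn : (G.induce S).Connected) :
    (H.induce (f '' S)).Connected ∧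
      ({e ∈ cutSet G S | ∀ u : VG, u ∈ e → ¬ ∃ x : VG, G.Adj u x ∧ f u = f x}).ncard ≤
        (cutSet H (f '' S)).ncard := by
  have hadjG : ∀ u v, G.Adj u v → f u ≠ f v → H.Adj (f u) (f v) :=
    fun u v huv hne ↦ (hadj _ _ hne).2 ⟨u, v, rfl, rfl, huv⟩
  have hsingleton : ∀ u, (¬ ∃ x, G.Adj u x ∧ f u = f x) → ∀ w, f w = f u → w = u :=
    fun u hu _ hw ↦ (hfiber (f u)).preconnected.eq_of_mem_of_forall_not_adj
      rfl hw fun x hx hux ↦ hu ⟨x, hux, hx.symm⟩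
  refine ⟨hSconn.induce_image hadjG, Set.ncard_le_ncard_of_injOn (Sym2.map f) ?_
    ((Sym2.injOn_map f).mono fun e he u hu ↦ hsingleton u (he.2 u hu))⟩
  rintro e ⟨⟨huv, u, v, rfl, hu, hv⟩, hgood⟩
  have hfne : f u ≠ f v := fun h ↦ hgood u (Sym2.mem_mk_left u v) ⟨v, huv, h⟩
  exact mk_mem_cutSet_image (hadjG u v huv hfne) hu hv
    (hsingleton v (hgood v (Sym2.mem_mk_right u v)))

/-- If `H` is obtained from `G` by contracting connected fibers of a
surjection `f`, and `S` is nonempty with `G[S]` connected, then `H[f(S)]` is connected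
and `|δ_H(f(S))|` is at least the number of edges of `δ_G(S)` neither of whose
endpoints is incident to a contracted edge (an edge inside a fiber). -/
theorem contraction_project {VG VH : Type*} [Fintype VG] [Fintype VH]
    (G : SimpleGraph VG) (H : SimpleGraph VH) (f : VG → VH)
    (hsurj : Function.Surjective f)
    (hfiber : ∀ a : VH, (G.induce (f ⁻¹' {a})).Connected)
    (hadj : ∀ a b : VH, a ≠ b →
      (H.Adj a b ↔ ∃ u v : VG, f u = a ∧ f v = b ∧ G.Adj u v))
    (S : Set VG) (hS : S.Nonempty) (hSconn : (G.induce S).Connected) :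
    (H.induce (f '' S)).Connected ∧
      ({e ∈ cutSet G S | ∀ u : VG, u ∈ e → ¬ ∃ x : VG, G.Adj u x ∧ f u = f x}).ncard ≤
        (cutSet H (f '' S)).ncard :=
  contraction_project_general G H f hfiber hadj S hSconn

end CMCPaper
end
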